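/- arXiv:2204.10599 — 12 statements merged into one kernel-verified Lean document; each statement's English description precedes it below -/
import Mathlib

section
/- Let X and Z be complex Hilbert spaces, E a bounded linear operator from X to Z, and A a densely defined closed operator from X to Z. Then the operator pencil (E,A) is dissipative (i.e., ‖(λE−A)x‖ ≥ λ‖Ex‖ for all λ>0 and x in the domain of A) if and only if Re⟨Ax, Ex⟩ ≤ 0 for all x in the domain of A. -/
/-! The condition is pointwise in `x`: with `u = E x`, `v = A x`,
`‖λu - v‖² - λ²‖u‖² = ‖v‖² - 2λ Re⟪v, u⟫`, and this is `≥ 0` for every `λ > 0`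
exactly when `Re⟪v, u⟫ ≤ 0` (let `λ → ∞`). -/

open scoped InnerProductSpace

lemma forall_pos_two_mul_mul_le_iff {r c : ℝ} (hc : 0 ≤ c) :
    (∀ l : ℝ, 0 < l → 2 * l * r ≤ c) ↔ r ≤ 0 := by
  refine ⟨fun h => ?_, fun hr l hl => by nlinarith⟩
  by_contra! hr
  -- `l = (c + 1) / (2 r)` makes `2 l r = c + 1`.
  have := h ((c + 1) / (2 * r)) (by positivity)
  rw [mul_comm 2, mul_assoc, div_mul_cancel₀ _ (by positivity)] at this
  linarith

section

variable {𝕜 F : Type*} [RCLike 𝕜] [SeminormedAddCommGroup F] [InnerProductSpace 𝕜 F]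

lemma norm_ofReal_smul_sub_sq (l : ℝ) (u v : F) :
    ‖(l : 𝕜) • u - v‖ ^ 2 = l ^ 2 * ‖u‖ ^ 2 - 2 * l * RCLike.re ⟪v, u⟫_𝕜 + ‖v‖ ^ 2 := by
  have hinner : RCLike.re ⟪(l : 𝕜) • u, v⟫_𝕜 = l * RCLike.re ⟪v, u⟫_𝕜 := by
    rw [inner_smul_left, RCLike.conj_ofReal, RCLike.re_ofReal_mul, inner_re_symm]
  rw [norm_sub_sq (𝕜 := 𝕜), hinner, norm_smul, RCLike.norm_ofReal, mul_pow, sq_abs]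
  ring

lemma mul_norm_le_norm_ofReal_smul_sub_iff {l : ℝ} (hl : 0 ≤ l) (u v : F) :
    l * ‖u‖ ≤ ‖(l : 𝕜) • u - v‖ ↔ 2 * l * RCLike.re ⟪v, u⟫_𝕜 ≤ ‖v‖ ^ 2 := by
  rw [← pow_le_pow_iff_left₀ (by positivity) (norm_nonneg _) two_ne_zero,
    norm_ofReal_smul_sub_sq (𝕜 := 𝕜), mul_pow]
  constructor <;> intro h <;> linarith

lemma forall_pos_mul_norm_le_norm_ofReal_smul_sub_iff (u v : F) :
    (∀ l : ℝ, 0 < l → l * ‖u‖ ≤ ‖(l : 𝕜) • u - v‖) ↔ RCLike.re ⟪v, u⟫_𝕜 ≤ 0 := by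
  rw [← forall_pos_two_mul_mul_le_iff (sq_nonneg ‖v‖)]
  exact forall₂_congr fun l hl => mul_norm_le_norm_ofReal_smul_sub_iff hl.le u v

end

theorem stmt0_general {X Z : Type*}
    [NormedAddCommGroup X] [InnerProductSpace ℂ X]
    [NormedAddCommGroup Z] [InnerProductSpace ℂ Z]
    (E : X →L[ℂ] Z) (A : X →ₗ.[ℂ] Z) :
    (∀ l : ℝ, 0 < l → ∀ x : A.domain, l * ‖E (x : X)‖ ≤ ‖(l : ℂ) • E (x : X) - A x‖)
      ↔ (∀ x : A.domain, (⟪A x, E (x : X)⟫_ℂ).re ≤ 0) := by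
  refine ⟨fun h x => ?_, fun h l hl x => ?_⟩
  · exact (forall_pos_mul_norm_le_norm_ofReal_smul_sub_iff (E x) (A x)).1 fun l hl => h l hl x
  · exact (forall_pos_mul_norm_le_norm_ofReal_smul_sub_iff (E x) (A x)).2 (h x) l hl

/-- For `E ∈ L(X,Z)` and `A` densely defined and closed, the pencil `(E,A)` is
dissipative (`‖(λE−A)x‖ ≥ λ‖Ex‖` for all `λ > 0`, `x ∈ D(A)`) iff `Re⟨Ax, Ex⟩ ≤ 0` on `D(A)`. -/
theorem stmt0 {X Z : Type*}
    [NormedAddCommGroup X] [InnerProductSpace ℂ X] [CompleteSpace X]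
    [NormedAddCommGroup Z] [InnerProductSpace ℂ Z] [CompleteSpace Z]
    (E : X →L[ℂ] Z) (A : X →ₗ.[ℂ] Z)
    (hdense : Dense (A.domain : Set X))
    (hclosed : IsClosed (A.graph : Set (X × Z))) :
    (∀ l : ℝ, 0 < l → ∀ x : A.domain, l * ‖E (x : X)‖ ≤ ‖(l : ℂ) • E (x : X) - A x‖)
      ↔ (∀ x : A.domain, (⟪A x, E (x : X)⟫_ℂ).re ≤ 0) :=
  stmt0_general E A
end

section
/- Let X and Z be complex Hilbert spaces, E a bounded linear operator from X to Z, and A a densely defined closed operator. If the pencil (E,A) is dissipative, then the following are equivalent: (1) ker A ∩ ker E = {0}; (2) ker(λE − A) = {0} for some λ > 0; (3) ker(λE − A) = {0} for every λ > 0. -/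
open scoped InnerProductSpace

/-- If the pencil `(E,A)` is dissipative, then the following are equivalent:
(1) `ker A ∩ ker E = {0}`; (2) `ker(λE − A) = {0}` for some `λ > 0`;
(3) `ker(λE − A) = {0}` for every `λ > 0`. -/
theorem stmt1 {X Z : Type*}
    [NormedAddCommGroup X] [InnerProductSpace ℂ X] [CompleteSpace X]
    [NormedAddCommGroup Z] [InnerProductSpace ℂ Z] [CompleteSpace Z]
    (E : X →L[ℂ] Z) (A : X →ₗ.[ℂ] Z)
    (hdense : Dense (A.domain : Set X))
    (hclosed : IsClosed (A.graph : Set (X × Z)))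
    (hdiss : ∀ x : A.domain, (⟪A x, E (x : X)⟫_ℂ).re ≤ 0) :
    ((∀ x : A.domain, A x = 0 → E (x : X) = 0 → (x : X) = 0) ↔
        (∃ l : ℝ, 0 < l ∧ ∀ x : A.domain, (l : ℂ) • E (x : X) - A x = 0 → (x : X) = 0)) ∧
    ((∀ x : A.domain, A x = 0 → E (x : X) = 0 → (x : X) = 0) ↔
        (∀ l : ℝ, 0 < l → ∀ x : A.domain, (l : ℂ) • E (x : X) - A x = 0 → (x : X) = 0)) := by
  have key : ∀ l : ℝ, 0 < l → ∀ x : A.domain, (l : ℂ) • E (x : X) - A x = 0 →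
      E (x : X) = 0 ∧ A x = 0 := by
    intro l hl x hx
    have hAx : A x = (l : ℂ) • E (x : X) := (sub_eq_zero.mp hx).symm
    have h1 : (⟪A x, E (x : X)⟫_ℂ).re = l * ‖E (x : X)‖ ^ 2 := by
      rw [hAx, inner_smul_left, inner_self_eq_norm_sq_to_K]
      push_cast
      simp [Complex.mul_re]
      left
      rw [← Complex.ofReal_pow, Complex.ofReal_re]
    have h2 := hdiss x
    rw [h1] at h2
    have h3 : ‖E (x : X)‖ ^ 2 ≤ 0 := by nlinarith
    have h4 : ‖E (x : X)‖ ≤ 0 := by nlinarith [norm_nonneg (E (x : X))]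
    have hE : E (x : X) = 0 := norm_le_zero_iff.mp h4
    refine ⟨hE, ?_⟩
    rw [hAx, hE, smul_zero]
  constructor
  · constructor
    · intro h
      exact ⟨1, one_pos, fun x hx => by
        obtain ⟨hE, hA⟩ := key 1 one_pos x hx
        exact h x hA hE⟩
    · intro ⟨l, hl, h⟩ x hA hE
      exact h x (by rw [hA, hE, smul_zero, sub_zero])
  · constructor
    · intro h l hl x hx
      obtain ⟨hE, hA⟩ := key l hl x hx
      exact h x hA hE
    · intro h x hA hE
      exact h 1 one_pos x (by rw [hA, hE, smul_zero, sub_zero])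
end

section
/- Let (E,A) be a dissipative operator pencil with A densely defined and closed. If some λ₀ > 0 belongs to the resolvent set ϱ(E,A) (i.e., (λ₀E−A)⁻¹ exists as a bounded operator from Z to X), then every λ > 0 belongs to ϱ(E,A). -/
/-!
Dissipativity gives `‖E (sE − A)⁻¹‖ ≤ 1 / Re s`, so by a Neumann series the resolvent set
contains the disc of radius `Re s` around each `s` with `Re s > 0`. For real `λ₀ > 0` this disc
covers `(0, 2λ₀)`; stepping from `λ₀` to `(3/2) λ₀`, `(3/2)² λ₀`, … reaches every `λ > 0`.
-/

open scoped InnerProductSpace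

/-- `s ∈ ϱ(E,A)`: the pencil `sE − A` has a bounded everywhere-defined inverse `R ∈ L(Z,X)`. -/
def InResolvent {X Z : Type*} [NormedAddCommGroup X] [NormedSpace ℂ X]
    [NormedAddCommGroup Z] [NormedSpace ℂ Z]
    (E : X →L[ℂ] Z) (A : X →ₗ.[ℂ] Z) (s : ℂ) : Prop :=
  ∃ R : Z →L[ℂ] X, (∀ z : Z, R z ∈ A.domain) ∧
    (∀ (z : Z) (h : R z ∈ A.domain), s • E (R z) - A ⟨R z, h⟩ = z) ∧
    (∀ x : A.domain, R (s • E (x : X) - A x) = x)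

/-- `InResolvent E A s` unfolds to `∃ R, IsPencilInverse E A s R`. -/
def IsPencilInverse {X Z : Type*} [NormedAddCommGroup X] [NormedSpace ℂ X]
    [NormedAddCommGroup Z] [NormedSpace ℂ Z]
    (E : X →L[ℂ] Z) (A : X →ₗ.[ℂ] Z) (s : ℂ) (R : Z →L[ℂ] X) : Prop :=
  (∀ z : Z, R z ∈ A.domain) ∧
    (∀ (z : Z) (h : R z ∈ A.domain), s • E (R z) - A ⟨R z, h⟩ = z) ∧
    (∀ x : A.domain, R (s • E (x : X) - A x) = x)

section Perturbation

variable {X Z : Type*} [NormedAddCommGroup X] [NormedSpace ℂ X]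
  [NormedAddCommGroup Z] [NormedSpace ℂ Z] {E : X →L[ℂ] Z} {A : X →ₗ.[ℂ] Z}

lemma pencil_apply_eq_add (s t : ℂ) (x : X) (y : Z) :
    t • E x - y = (s • E x - y) + (t - s) • E x := by
  rw [sub_smul]; abel

/-- Neumann series: `tE − A = (1 + (t − s) E R)(sE − A)` on `D(A)`, and the first factor is
invertible as soon as `‖t − s‖ ‖E R‖ < 1`. -/
theorem IsPencilInverse.inResolvent_of_norm_mul_lt [CompleteSpace Z] {s t : ℂ} {R : Z →L[ℂ] X}
    (hR : IsPencilInverse E A s R) (hst : ‖t - s‖ * ‖E ∘L R‖ < 1) : InResolvent E A t := by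
  obtain ⟨hdom, hright, hleft⟩ := hR
  have hsmall : ‖-((t - s) • (E ∘L R))‖ < 1 := by rwa [norm_neg, norm_smul]
  set u := Units.oneSub _ hsmall
  have hu : ∀ z, (u : Z →L[ℂ] Z) z = z + (t - s) • E (R z) := fun z => by
    simp [u, Units.oneSub, sub_eq_add_neg]
  have hu_inv : ∀ z, (u : Z →L[ℂ] Z) ((↑u⁻¹ : Z →L[ℂ] Z) z) = z := fun z => by
    rw [← mul_apply_eq_comp, u.mul_inv, one_apply_eq_self]
  have hinv_u : ∀ z, (↑u⁻¹ : Z →L[ℂ] Z) ((u : Z →L[ℂ] Z) z) = z := fun z => by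
    rw [← mul_apply_eq_comp, u.inv_mul, one_apply_eq_self]
  refine ⟨R ∘L ↑u⁻¹, fun z => hdom _, fun z h => ?_, fun x => ?_⟩
  · set w := (↑u⁻¹ : Z →L[ℂ] Z) z
    change t • E (R w) - A ⟨R w, h⟩ = z
    rw [pencil_apply_eq_add s, hright w h, ← hu, hu_inv]
  · have hux : (u : Z →L[ℂ] Z) (s • E (x : X) - A x) = t • E (x : X) - A x := by
      rw [hu, hleft, ← pencil_apply_eq_add]
    change R ((↑u⁻¹ : Z →L[ℂ] Z) _) = x
    rw [← hux, hinv_u, hleft]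

end Perturbation

section Dissipative

variable {X Z : Type*} [NormedAddCommGroup X] [NormedSpace ℂ X]
  [NormedAddCommGroup Z] [InnerProductSpace ℂ Z] {E : X →L[ℂ] Z} {A : X →ₗ.[ℂ] Z}

/-- `Re⟨sEx − Ax, Ex⟩ ≥ Re s ‖Ex‖²` by dissipativity; then Cauchy–Schwarz. -/
lemma re_mul_norm_le_norm_pencil_of_dissipative
    (hdiss : ∀ x : A.domain, (⟪A x, E (x : X)⟫_ℂ).re ≤ 0) (s : ℂ) (x : A.domain) :
    s.re * ‖E x‖ ≤ ‖s • E x - A x‖ := by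
  have hinner : s.re * ‖E x‖ ^ 2 ≤ ‖s • E x - A x‖ * ‖E x‖ := calc
    s.re * ‖E x‖ ^ 2 ≤ (⟪s • E x - A x, E x⟫_ℂ).re := by
      rw [inner_sub_left, inner_smul_left, inner_self_eq_norm_sq_to_K, Complex.sub_re]
      simp only [Complex.coe_algebraMap, ← Complex.ofReal_pow, Complex.re_mul_ofReal,
        Complex.conj_re]
      linarith [hdiss x]
    _ ≤ ‖s • E x - A x‖ * ‖E x‖ := (Complex.re_le_norm _).trans (norm_inner_le_norm _ _)
  rcases (norm_nonneg (E x)).eq_or_lt with h0 | hpos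
  · rw [← h0, mul_zero]; exact norm_nonneg _
  · nlinarith

lemma IsPencilInverse.norm_comp_le_of_dissipative
    (hdiss : ∀ x : A.domain, (⟪A x, E (x : X)⟫_ℂ).re ≤ 0) {s : ℂ} (hs : 0 < s.re)
    {R : Z →L[ℂ] X} (hR : IsPencilInverse E A s R) : ‖E ∘L R‖ ≤ (s.re)⁻¹ := by
  refine ContinuousLinearMap.opNorm_le_bound _ (by positivity) fun z => ?_
  rw [inv_mul_eq_div, le_div_iff₀ hs, mul_comm]
  have := re_mul_norm_le_norm_pencil_of_dissipative hdiss s ⟨R z, hR.1 z⟩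
  rwa [hR.2.1 z (hR.1 z)] at this

theorem InResolvent.of_norm_sub_lt_re [CompleteSpace Z]
    (hdiss : ∀ x : A.domain, (⟪A x, E (x : X)⟫_ℂ).re ≤ 0) {s t : ℂ} (hs : 0 < s.re)
    (hres : InResolvent E A s) (hst : ‖t - s‖ < s.re) : InResolvent E A t := by
  obtain ⟨R, hR : IsPencilInverse E A s R⟩ := hres
  refine hR.inResolvent_of_norm_mul_lt ?_
  calc ‖t - s‖ * ‖E ∘L R‖ ≤ ‖t - s‖ * (s.re)⁻¹ := by
        gcongr; exact hR.norm_comp_le_of_dissipative hdiss hs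
    _ < s.re * (s.re)⁻¹ := by gcongr
    _ = 1 := mul_inv_cancel₀ hs.ne'

theorem InResolvent.of_lt_two_mul [CompleteSpace Z]
    (hdiss : ∀ x : A.domain, (⟪A x, E (x : X)⟫_ℂ).re ≤ 0) {m l : ℝ} (hm : 0 < m)
    (hres : InResolvent E A (m : ℂ)) (hl : 0 < l) (hlm : l < 2 * m) :
    InResolvent E A (l : ℂ) := by
  refine hres.of_norm_sub_lt_re hdiss (by simpa using hm) ?_
  rw [← Complex.ofReal_sub, Complex.norm_real, Real.norm_eq_abs, Complex.ofReal_re, abs_lt]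
  constructor <;> linarith

end Dissipative

theorem stmt2_general {X Z : Type*}
    [NormedAddCommGroup X] [InnerProductSpace ℂ X]
    [NormedAddCommGroup Z] [InnerProductSpace ℂ Z] [CompleteSpace Z]
    (E : X →L[ℂ] Z) (A : X →ₗ.[ℂ] Z)
    (hdiss : ∀ x : A.domain, (⟪A x, E (x : X)⟫_ℂ).re ≤ 0)
    (l₀ : ℝ) (hl₀ : 0 < l₀) (hres : InResolvent E A (l₀ : ℂ)) :
    ∀ l : ℝ, 0 < l → InResolvent E A (l : ℂ) := by
  have hgrowth : ∀ n : ℕ, InResolvent E A (((3 / 2 : ℝ) ^ n * l₀ : ℝ) : ℂ) := by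
    intro n
    induction n with
    | zero => simpa using hres
    | succ n ih =>
      refine ih.of_lt_two_mul hdiss (by positivity) (by positivity) ?_
      rw [pow_succ]
      nlinarith [pow_pos (by norm_num : (0 : ℝ) < 3 / 2) n]
  intro l hl
  obtain ⟨n, hn⟩ := pow_unbounded_of_one_lt (l / l₀) (by norm_num : (1 : ℝ) < 3 / 2)
  have hln : l < (3 / 2 : ℝ) ^ n * l₀ := (div_lt_iff₀ hl₀).mp hn
  exact (hgrowth n).of_lt_two_mul hdiss (by positivity) hl (by linarith)

/-- If the pencil `(E,A)` is dissipative and some `λ₀ > 0` belongs to `ϱ(E,A)`,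
then every `λ > 0` belongs to `ϱ(E,A)`. -/
theorem stmt2 {X Z : Type*}
    [NormedAddCommGroup X] [InnerProductSpace ℂ X] [CompleteSpace X]
    [NormedAddCommGroup Z] [InnerProductSpace ℂ Z] [CompleteSpace Z]
    (E : X →L[ℂ] Z) (A : X →ₗ.[ℂ] Z)
    (hdense : Dense (A.domain : Set X))
    (hclosed : IsClosed (A.graph : Set (X × Z)))
    (hdiss : ∀ x : A.domain, (⟪A x, E (x : X)⟫_ℂ).re ≤ 0)
    (l₀ : ℝ) (hl₀ : 0 < l₀) (hres : InResolvent E A (l₀ : ℂ)) :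
    ∀ l : ℝ, 0 < l → InResolvent E A (l : ℂ) :=
  stmt2_general E A hdiss l₀ hl₀ hres
end

section
/- Let (E,A) be a dissipative operator pencil and suppose λ₀ > 0 lies in ϱ(E,A). Then for every λ > 0, the range of λE − A is dense in Z. More precisely, if z ∈ Z is orthogonal to ran(λE−A), writing z = (λ₀E−A)x, one deduces Ex = 0 and Ax = 0 and hence x = 0 and z = 0. -/
open scoped InnerProductSpace

set_option maxHeartbeats 2000000 in
/-- If the pencil `(E,A)` is dissipative and `λ₀ > 0` lies in `ϱ(E,A)`, then for
every `λ > 0` the range of `λE − A` is dense in `Z`. -/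
theorem stmt3 {X Z : Type*}
    [NormedAddCommGroup X] [InnerProductSpace ℂ X] [CompleteSpace X]
    [NormedAddCommGroup Z] [InnerProductSpace ℂ Z] [CompleteSpace Z]
    (E : X →L[ℂ] Z) (A : X →ₗ.[ℂ] Z)
    (hdense : Dense (A.domain : Set X))
    (hclosed : IsClosed (A.graph : Set (X × Z)))
    (hdiss : ∀ x : A.domain, (⟪A x, E (x : X)⟫_ℂ).re ≤ 0)
    (l₀ : ℝ) (hl₀ : 0 < l₀) (hres : InResolvent E A (l₀ : ℂ)) :
    ∀ l : ℝ, 0 < l →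
      Dense {z : Z | ∃ x : A.domain, (l : ℂ) • E (x : X) - A x = z} := by
  intro l hl
  obtain ⟨R, hRdom, hRz, hRx⟩ := hres
  set f : A.domain →ₗ[ℂ] Z :=
    (l : ℂ) • (E.toLinearMap.comp A.domain.subtype) - A.toFun with hf
  have hfx : ∀ x : A.domain, f x = (l : ℂ) • E (x : X) - A x := fun x => rfl
  set S : Submodule ℂ Z := LinearMap.range f with hS
  have hset : {z : Z | ∃ x : A.domain, (l : ℂ) • E (x : X) - A x = z} = (S : Set Z) := by
    ext z
    simp only [Set.mem_setOf_eq, SetLike.mem_coe, hS, LinearMap.mem_range, hfx]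
  rw [hset]
  rw [Submodule.dense_iff_topologicalClosure_eq_top,
    Submodule.topologicalClosure_eq_top_iff]
  rw [Submodule.eq_bot_iff]
  intro z hz
  -- write `z = (l₀ E − A) x` with `x = R z`
  obtain ⟨x, hzx⟩ : ∃ x : A.domain, (l₀ : ℂ) • E (x : X) - A x = z :=
    ⟨⟨R z, hRdom z⟩, hRz z (hRdom z)⟩
  set e := E (x : X) with he
  set a := A x with ha
  -- `z` is orthogonal to `(lE − A) x`
  have horth : ⟪(l : ℂ) • e - a, z⟫_ℂ = 0 := by
    apply (Submodule.mem_orthogonal S z).mp hz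
    exact ⟨x, rfl⟩
  rw [← hzx] at horth
  have hre : l * (l₀ * (⟪e, e⟫_ℂ).re) - l * (⟪e, a⟫_ℂ).re
      - (l₀ * (⟪a, e⟫_ℂ).re - (⟪a, a⟫_ℂ).re) = 0 := by
    have := congrArg Complex.re horth
    simp only [inner_sub_left, inner_sub_right, inner_smul_left, inner_smul_right,
      Complex.conj_ofReal, Complex.sub_re, Complex.mul_re, Complex.ofReal_re,
      Complex.ofReal_im, Complex.zero_re] at this
    linarith
  have hsym : (⟪e, a⟫_ℂ).re = (⟪a, e⟫_ℂ).re := by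
    rw [← inner_conj_symm e a]; exact Complex.conj_re _
  have hee : (⟪e, e⟫_ℂ).re = ‖e‖ ^ 2 := by
    rw [inner_self_eq_norm_sq_to_K]; simp [← Complex.ofReal_pow]
  have haa : (⟪a, a⟫_ℂ).re = ‖a‖ ^ 2 := by
    rw [inner_self_eq_norm_sq_to_K]; simp [← Complex.ofReal_pow]
  have hd : (⟪a, e⟫_ℂ).re ≤ 0 := hdiss x
  rw [hsym, hee, haa] at hre
  clear_value e a
  clear hz horth hsym hee haa
  have hpos : 0 < l * l₀ := mul_pos hl hl₀
  have hsum : l * l₀ * ‖e‖ ^ 2 + ‖a‖ ^ 2 ≤ 0 := by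
    nlinarith [mul_nonpos_of_nonneg_of_nonpos (by linarith : (0:ℝ) ≤ l + l₀) hd]
  have he0 : ‖e‖ = 0 := by
    have h2 : ‖e‖ ^ 2 ≤ 0 := by nlinarith [sq_nonneg ‖a‖, sq_nonneg ‖e‖]
    nlinarith [norm_nonneg e]
  have ha0 : ‖a‖ = 0 := by
    have h2 : ‖a‖ ^ 2 ≤ 0 := by nlinarith [mul_nonneg hpos.le (sq_nonneg ‖e‖)]
    nlinarith [norm_nonneg a]
  have he0' : e = 0 := norm_eq_zero.mp he0
  have ha0' : a = 0 := norm_eq_zero.mp ha0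
  rw [← hzx, he0', ha0', smul_zero, sub_zero]
end

section
/- Let (E,A) be a dissipative operator pencil and suppose there is a constant c₀ > 0 such that ‖(λ₀E−A)x‖² ≥ c₀ for all x ∈ D(A) with ‖x‖ = 1, for some λ₀ > 0. Then for every λ > 0 there exists c_λ > 0 such that ‖(λE−A)x‖² = λ²‖Ex‖² − 2λ Re⟨Ex,Ax⟩ + ‖Ax‖² ≥ c_λ for all x ∈ D(A) with ‖x‖ = 1; consequently ran(λE−A) is closed for every λ > 0. -/
/-!
Expanding the square, `‖(λE - A)x‖² = λ²‖Ex‖² - 2λ Re⟨Ex, Ax⟩ + ‖Ax‖²`, and dissipativity makes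
the middle term nonnegative. Hence the square is nondecreasing in `λ`, and for `λ < λ₀` it is
at least `(λ/λ₀)²‖(λ₀E - A)x‖²`; so the lower bound at `λ₀` transfers to every `λ > 0`. The
pencil `λE - A` is closed, as a bounded perturbation of the closed operator `-A`, and a closed
operator that is bounded below has closed range.
-/

open scoped InnerProductSpace

namespace LinearPMap

variable {R X Z : Type*} [CommRing R] [NormedAddCommGroup X] [NormedAddCommGroup Z]
  [Module R X] [Module R Z]

theorem IsClosed.neg {A : X →ₗ.[R] Z} (hA : A.IsClosed) : (-A).IsClosed := by
  have : ((-A).graph : Set (X × Z)) = (fun p : X × Z => (p.1, -p.2)) ⁻¹' A.graph := by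
    ext ⟨x, z⟩
    simp [neg_eq_iff_eq_neg]
  rw [LinearPMap.IsClosed, this]
  exact hA.preimage (by fun_prop)

theorem IsClosed.vadd {A : X →ₗ.[R] Z} (hA : A.IsClosed) (B : X →L[R] Z) :
    ((B : X →ₗ[R] Z) +ᵥ A).IsClosed := by
  have : (((B : X →ₗ[R] Z) +ᵥ A).graph : Set (X × Z)) =
      (fun p : X × Z => (p.1, p.2 - B p.1)) ⁻¹' A.graph := by
    ext ⟨x, z⟩
    simp [eq_sub_iff_add_eq, add_comm]
  rw [LinearPMap.IsClosed, this]
  exact hA.preimage (by fun_prop)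

theorem IsClosed.isClosed_range [CompleteSpace X] {T : X →ₗ.[R] Z} (hT : T.IsClosed) {c : ℝ}
    (hc : 0 < c) (hbelow : ∀ x : T.domain, c * ‖(x : X)‖ ≤ ‖T x‖) :
    _root_.IsClosed (Set.range T) := by
  refine IsSeqClosed.isClosed fun u z hu hlim => ?_
  choose x hx using hu
  obtain rfl : u = fun n => T (x n) := funext fun n => (hx n).symm
  have hcauchy : CauchySeq fun n => (x n : X) := by
    obtain ⟨b, hb0, hbu, hb⟩ := cauchySeq_iff_le_tendsto_0.1 hlim.cauchySeq
    refine cauchySeq_iff_le_tendsto_0.2 ⟨fun N => b N / c, fun N => div_nonneg (hb0 N) hc.le,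
      fun n m N hn hm => ?_, by simpa using hb.div_const c⟩
    rw [le_div_iff₀' hc, dist_eq_norm]
    calc c * ‖(x n : X) - x m‖ = c * ‖((x n - x m : T.domain) : X)‖ := rfl
      _ ≤ ‖T (x n - x m)‖ := hbelow _
      _ = dist (T (x n)) (T (x m)) := by rw [map_sub, dist_eq_norm]
      _ ≤ b N := hbu n m N hn hm
  obtain ⟨y, hy⟩ := cauchySeq_tendsto_of_complete hcauchy
  obtain ⟨w, rfl, rfl⟩ := (T.mem_graph_iff).1 <|
    hT.isSeqClosed (fun n => T.mem_graph (x n)) (hy.prodMk_nhds hlim)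
  exact ⟨w, rfl⟩

end LinearPMap

section

variable {𝕜 V W : Type*} [RCLike 𝕜] [NormedAddCommGroup V] [NormedSpace 𝕜 V]
  [NormedAddCommGroup W] [NormedSpace 𝕜 W]

theorem LinearMap.mul_norm_le_norm_of_forall_norm_eq_one (f : V →ₗ[𝕜] W) {c : ℝ}
    (hf : ∀ x, ‖x‖ = 1 → c ≤ ‖f x‖) (x : V) : c * ‖x‖ ≤ ‖f x‖ := by
  rcases eq_or_ne x 0 with rfl | hx
  · simp
  have hx' : 0 < ‖x‖ := norm_pos_iff.2 hx
  have := hf _ (norm_smul_inv_norm (𝕜 := 𝕜) hx)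
  rw [map_smul, norm_smul, norm_inv, RCLike.norm_ofReal, abs_norm, le_inv_mul_iff₀ hx'] at this
  linarith [mul_comm c ‖x‖]

end

section

variable {𝕜 Z : Type*} [RCLike 𝕜] [NormedAddCommGroup Z] [InnerProductSpace 𝕜 Z]

theorem norm_ofReal_smul_sub_sq_s4 (r : ℝ) (e a : Z) :
    ‖(r : 𝕜) • e - a‖ ^ 2 = r ^ 2 * ‖e‖ ^ 2 - 2 * r * RCLike.re ⟪e, a⟫_𝕜 + ‖a‖ ^ 2 := by
  rw [@norm_sub_sq 𝕜, norm_smul, RCLike.norm_ofReal, mul_pow, sq_abs, inner_smul_left,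
    RCLike.conj_ofReal, RCLike.re_ofReal_mul]
  ring

theorem min_div_one_mul_norm_ofReal_smul_sub_le {μ r : ℝ} (hμ : 0 < μ) (hr : 0 < r) {e a : Z}
    (hea : RCLike.re ⟪e, a⟫_𝕜 ≤ 0) :
    min (r / μ) 1 * ‖(μ : 𝕜) • e - a‖ ≤ ‖(r : 𝕜) • e - a‖ := by
  set s := min (r / μ) 1
  have hs0 : 0 ≤ s := by positivity
  have hs1 : s ≤ 1 := min_le_right _ _
  have hsμ : s * μ ≤ r := (le_div_iff₀ hμ).1 (min_le_left _ _)
  rw [← pow_le_pow_iff_left₀ (by positivity) (norm_nonneg _) two_ne_zero, mul_pow,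
    norm_ofReal_smul_sub_sq_s4, norm_ofReal_smul_sub_sq_s4]
  have hs2 : s ^ 2 ≤ 1 := pow_le_one₀ hs0 hs1
  have hsμ2 : (s * μ) ^ 2 ≤ r ^ 2 := pow_le_pow_left₀ (by positivity) hsμ 2
  have hs2μ : s ^ 2 * μ ≤ r := by nlinarith
  nlinarith [mul_le_mul_of_nonneg_right hsμ2 (sq_nonneg ‖e‖),
    mul_le_mul_of_nonneg_right hs2μ (neg_nonneg.2 hea),
    mul_le_mul_of_nonneg_right hs2 (sq_nonneg ‖a‖)]

end

section

variable {𝕜 X Z : Type*} [NormedField 𝕜] [NormedAddCommGroup X] [NormedSpace 𝕜 X]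
  [NormedAddCommGroup Z] [NormedSpace 𝕜 Z]

def pencil (E : X →L[𝕜] Z) (A : X →ₗ.[𝕜] Z) (r : 𝕜) : X →ₗ.[𝕜] Z :=
  ((r • E : X →L[𝕜] Z) : X →ₗ[𝕜] Z) +ᵥ -A

theorem pencil_apply (E : X →L[𝕜] Z) (A : X →ₗ.[𝕜] Z) (r : 𝕜) (x : A.domain) :
    pencil E A r x = r • E x - A x :=
  (sub_eq_add_neg _ _).symm

theorem isClosed_pencil (E : X →L[𝕜] Z) {A : X →ₗ.[𝕜] Z} (hA : A.IsClosed) (r : 𝕜) :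
    (pencil E A r).IsClosed :=
  hA.neg.vadd _

end

theorem stmt4_general {X Z : Type*}
    [NormedAddCommGroup X] [InnerProductSpace ℂ X] [CompleteSpace X]
    [NormedAddCommGroup Z] [InnerProductSpace ℂ Z]
    (E : X →L[ℂ] Z) (A : X →ₗ.[ℂ] Z)
    (hclosed : IsClosed (A.graph : Set (X × Z)))
    (hdiss : ∀ x : A.domain, (⟪A x, E (x : X)⟫_ℂ).re ≤ 0)
    (l₀ : ℝ) (hl₀ : 0 < l₀) (c₀ : ℝ) (hc₀ : 0 < c₀)
    (hbound : ∀ x : A.domain, ‖(x : X)‖ = 1 → c₀ ≤ ‖(l₀ : ℂ) • E (x : X) - A x‖ ^ 2) :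
    ∀ l : ℝ, 0 < l →
      (∃ c : ℝ, 0 < c ∧ ∀ x : A.domain, ‖(x : X)‖ = 1 →
        (‖(l : ℂ) • E (x : X) - A x‖ ^ 2
            = l ^ 2 * ‖E (x : X)‖ ^ 2 - 2 * l * (⟪E (x : X), A x⟫_ℂ).re + ‖A x‖ ^ 2) ∧
        c ≤ ‖(l : ℂ) • E (x : X) - A x‖ ^ 2) ∧
      IsClosed {z : Z | ∃ x : A.domain, (l : ℂ) • E (x : X) - A x = z} := by
  intro l hl
  set s := min (l / l₀) 1 * √c₀
  have hs : 0 < s := by positivity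
  have hlow : ∀ x : A.domain, s * ‖(x : X)‖ ≤ ‖pencil E A (l : ℂ) x‖ := by
    intro x
    have hunit₀ (y : A.domain) (hy : ‖(y : X)‖ = 1) : √c₀ ≤ ‖pencil E A (l₀ : ℂ) y‖ := by
      rw [pencil_apply]
      exact Real.sqrt_le_iff.2 ⟨norm_nonneg _, hbound y hy⟩
    have h₀ : √c₀ * ‖(x : X)‖ ≤ ‖pencil E A (l₀ : ℂ) x‖ :=
      (pencil E A (l₀ : ℂ)).toFun.mul_norm_le_norm_of_forall_norm_eq_one hunit₀ x
    rw [pencil_apply] at h₀ ⊢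
    calc s * ‖(x : X)‖ = min (l / l₀) 1 * (√c₀ * ‖(x : X)‖) := mul_assoc _ _ _
      _ ≤ min (l / l₀) 1 * ‖(l₀ : ℂ) • E x - A x‖ := by gcongr
      _ ≤ ‖(l : ℂ) • E x - A x‖ :=
        min_div_one_mul_norm_ofReal_smul_sub_le hl₀ hl (by rw [inner_re_symm]; exact hdiss x)
  refine ⟨⟨s ^ 2, by positivity, fun x hx => ⟨norm_ofReal_smul_sub_sq_s4 _ _ _, ?_⟩⟩, ?_⟩
  · have h := hlow x
    rw [hx, mul_one, pencil_apply] at h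
    exact pow_le_pow_left₀ hs.le h 2
  · have hrange :
        Set.range (pencil E A (l : ℂ)) = {z | ∃ x : A.domain, (l : ℂ) • E x - A x = z} :=
      Set.ext fun z => exists_congr fun x => Eq.congr_left (pencil_apply E A _ x)
    exact hrange ▸ (isClosed_pencil E hclosed (l : ℂ)).isClosed_range hs hlow

/-- If the pencil `(E,A)` is dissipative and for some `λ₀ > 0` there is `c₀ > 0`
with `‖(λ₀E−A)x‖² ≥ c₀` for all unit vectors `x ∈ D(A)`, then for every `λ > 0` there is
`c_λ > 0` with `‖(λE−A)x‖² = λ²‖Ex‖² − 2λ Re⟨Ex,Ax⟩ + ‖Ax‖² ≥ c_λ` on unit vectors of `D(A)`;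
consequently the range of `λE − A` is closed for every `λ > 0`. -/
theorem stmt4 {X Z : Type*}
    [NormedAddCommGroup X] [InnerProductSpace ℂ X] [CompleteSpace X]
    [NormedAddCommGroup Z] [InnerProductSpace ℂ Z] [CompleteSpace Z]
    (E : X →L[ℂ] Z) (A : X →ₗ.[ℂ] Z)
    (hdense : Dense (A.domain : Set X))
    (hclosed : IsClosed (A.graph : Set (X × Z)))
    (hdiss : ∀ x : A.domain, (⟪A x, E (x : X)⟫_ℂ).re ≤ 0)
    (l₀ : ℝ) (hl₀ : 0 < l₀) (c₀ : ℝ) (hc₀ : 0 < c₀)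
    (hbound : ∀ x : A.domain, ‖(x : X)‖ = 1 → c₀ ≤ ‖(l₀ : ℂ) • E (x : X) - A x‖ ^ 2) :
    ∀ l : ℝ, 0 < l →
      (∃ c : ℝ, 0 < c ∧ ∀ x : A.domain, ‖(x : X)‖ = 1 →
        (‖(l : ℂ) • E (x : X) - A x‖ ^ 2
            = l ^ 2 * ‖E (x : X)‖ ^ 2 - 2 * l * (⟪E (x : X), A x⟫_ℂ).re + ‖A x‖ ^ 2) ∧
        c ≤ ‖(l : ℂ) • E (x : X) - A x‖ ^ 2) ∧
      IsClosed {z : Z | ∃ x : A.domain, (l : ℂ) • E (x : X) - A x = z} :=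
  stmt4_general E A hclosed hdiss l₀ hl₀ c₀ hc₀ hbound
end

section
/- Let E ∈ L(X,Z) and A densely defined and closed with some λ > 0 in ϱ(E,A). If Re⟨Ax, Ex⟩_Z ≤ 0 for all x ∈ D(A), then for every λ > 0: λ ∈ ϱ(E,A) and ‖E(λE−A)⁻¹‖ ≤ 1/λ. -/
/-!
Dissipativity gives `λ‖Ex‖ ≤ ‖(λE - A)x‖` on `D(A)`, so whenever `λ > 0` lies in `ϱ(E,A)` the
operator `E(λE - A)⁻¹` has norm at most `1/λ`. On `D(A)` one has
`νE - A = (1 + (ν - λ)E(λE - A)⁻¹)(λE - A)`, and the first factor is invertible by the Neumann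
series as soon as `|ν - λ| < λ`. Hence `λ ∈ ϱ(E,A)` forces `(0, 2λ) ⊆ ϱ(E,A)`, and starting
from `λ₀` this covers all of `(0, ∞)`.
-/

open scoped InnerProductSpace

theorem forall_pos_of_imp_Ioo_two_mul {P : ℝ → Prop} {l₀ : ℝ} (hl₀ : 0 < l₀) (h₀ : P l₀)
    (hstep : ∀ m, 0 < m → P m → ∀ l ∈ Set.Ioo 0 (2 * m), P l) :
    ∀ l, 0 < l → P l := by
  have key : ∀ n : ℕ, ∀ l, 0 < l → l ≤ (3 / 2) ^ n * l₀ → P l := by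
    intro n
    induction n with
    | zero => exact fun l hl hle => hstep l₀ hl₀ h₀ l ⟨hl, by linarith⟩
    | succ n ih =>
      intro l hl hle
      rw [pow_succ] at hle
      exact hstep (2 / 3 * l) (by positivity) (ih _ (by positivity) (by linarith)) l
        ⟨hl, by linarith⟩
  intro l hl
  obtain ⟨n, hn⟩ := pow_unbounded_of_one_lt (l / l₀) (by norm_num : (1 : ℝ) < 3 / 2)
  exact key n l hl ((div_lt_iff₀ hl₀).1 hn).le

section Resolvent

variable {𝕜 X Z : Type*} [NontriviallyNormedField 𝕜] [NormedAddCommGroup X] [NormedSpace 𝕜 X]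
  [NormedAddCommGroup Z] [NormedSpace 𝕜 Z]

/-- `R = (μE - A)⁻¹`, i.e. `μ ∈ ϱ(E,A)` with resolvent `R`. -/
def IsResolventAt (E : X →L[𝕜] Z) (A : X →ₗ.[𝕜] Z) (μ : 𝕜) (R : Z →L[𝕜] X) : Prop :=
  (∀ z, R z ∈ A.domain) ∧ (∀ z (h : R z ∈ A.domain), μ • E (R z) - A ⟨R z, h⟩ = z) ∧
    ∀ x : A.domain, R (μ • E x - A x) = x

namespace IsResolventAt

variable {E : X →L[𝕜] Z} {A : X →ₗ.[𝕜] Z} {μ ν : 𝕜} {R : Z →L[𝕜] X}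

theorem comp_symm (hR : IsResolventAt E A μ R) (e : Z ≃L[𝕜] Z)
    (he : ∀ z, e z = z + (ν - μ) • E (R z)) :
    IsResolventAt E A ν (R.comp (e.symm : Z →L[𝕜] Z)) := by
  obtain ⟨hmem, hright, hleft⟩ := hR
  have factor : ∀ x : A.domain, ν • E x - A x = e (μ • E x - A x) := by
    intro x
    rw [he, hleft, sub_smul]
    abel
  refine ⟨fun z => hmem _, fun z h => ?_, fun x => ?_⟩
  · rw [factor ⟨_, h⟩]
    exact (congrArg e (hright (e.symm z) h)).trans (e.apply_symm_apply z)
  · rw [ContinuousLinearMap.comp_apply, factor, ContinuousLinearEquiv.coe_coe,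
      e.symm_apply_apply, hleft]

theorem exists_of_norm_sub_mul_lt_one [CompleteSpace Z] (hR : IsResolventAt E A μ R)
    (hν : ‖ν - μ‖ * ‖E.comp R‖ < 1) :
    ∃ R', IsResolventAt E A ν R' := by
  set T : Z →L[𝕜] Z := (ν - μ) • E.comp R
  have hT : ‖-T‖ < 1 := by
    rw [norm_neg]
    exact (norm_smul_le _ _).trans_lt hν
  refine ⟨_, hR.comp_symm (ContinuousLinearEquiv.unitsEquiv 𝕜 Z (Units.oneSub (-T) hT))
    fun z => ?_⟩
  simp [T]

end IsResolventAt

end Resolvent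

section Dissipative

variable {𝕜 X Z : Type*} [RCLike 𝕜] [NormedAddCommGroup X] [InnerProductSpace 𝕜 X]
  [NormedAddCommGroup Z] [InnerProductSpace 𝕜 Z]
  {E : X →L[𝕜] Z} {A : X →ₗ.[𝕜] Z}

theorem mul_norm_le_norm_smul_sub_of_re_inner_nonpos
    (hdiss : ∀ x : A.domain, RCLike.re ⟪A x, E x⟫_𝕜 ≤ 0) (l : ℝ) (x : A.domain) :
    l * ‖E x‖ ≤ ‖(l : 𝕜) • E x - A x‖ := by
  rcases (norm_nonneg (E x)).eq_or_lt with h0 | hpos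
  · rw [← h0, mul_zero]
    exact norm_nonneg _
  refine le_of_mul_le_mul_right ?_ hpos
  calc l * ‖E x‖ * ‖E x‖ = RCLike.re ⟪(l : 𝕜) • E x, E x⟫_𝕜 := by
        rw [inner_smul_real_left, RCLike.smul_re, inner_self_eq_norm_sq]; ring
    _ ≤ RCLike.re ⟪(l : 𝕜) • E x - A x, E x⟫_𝕜 := by
        rw [inner_sub_left, map_sub]; linarith [hdiss x]
    _ ≤ ‖(l : 𝕜) • E x - A x‖ * ‖E x‖ := re_inner_le_norm _ _

theorem IsResolventAt.opNorm_comp_le_of_re_inner_nonpos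
    (hdiss : ∀ x : A.domain, RCLike.re ⟪A x, E x⟫_𝕜 ≤ 0) {l : ℝ} (hl : 0 < l)
    {R : Z →L[𝕜] X} (hR : IsResolventAt E A (l : 𝕜) R) :
    ‖E.comp R‖ ≤ 1 / l := by
  refine ContinuousLinearMap.opNorm_le_bound _ (by positivity) fun z => ?_
  have h := mul_norm_le_norm_smul_sub_of_re_inner_nonpos hdiss l ⟨R z, hR.1 z⟩
  rw [hR.2.1 z (hR.1 z)] at h
  rw [ContinuousLinearMap.comp_apply, div_mul_eq_mul_div, one_mul, le_div_iff₀ hl, mul_comm]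
  exact h

theorem IsResolventAt.exists_of_re_inner_nonpos [CompleteSpace Z]
    (hdiss : ∀ x : A.domain, RCLike.re ⟪A x, E x⟫_𝕜 ≤ 0) {m : ℝ} (hm : 0 < m)
    {R : Z →L[𝕜] X} (hR : IsResolventAt E A (m : 𝕜) R) {l : ℝ} (hl : l ∈ Set.Ioo 0 (2 * m)) :
    ∃ R', IsResolventAt E A (l : 𝕜) R' := by
  refine hR.exists_of_norm_sub_mul_lt_one ?_
  have hlm : |l - m| < m := abs_sub_lt_iff.2 ⟨by linarith [hl.2], by linarith [hl.1]⟩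
  rw [← RCLike.ofReal_sub, RCLike.norm_ofReal]
  calc |l - m| * ‖E.comp R‖ ≤ |l - m| * (1 / m) :=
        mul_le_mul_of_nonneg_left (hR.opNorm_comp_le_of_re_inner_nonpos hdiss hm) (abs_nonneg _)
    _ < m * (1 / m) := mul_lt_mul_of_pos_right hlm (by positivity)
    _ = 1 := by field_simp

end Dissipative

theorem stmt5_general {X Z : Type*}
    [NormedAddCommGroup X] [InnerProductSpace ℂ X]
    [NormedAddCommGroup Z] [InnerProductSpace ℂ Z] [CompleteSpace Z]
    (E : X →L[ℂ] Z) (A : X →ₗ.[ℂ] Z)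
    (l₀ : ℝ) (hl₀ : 0 < l₀)
    (hres : ∃ R₀ : Z →L[ℂ] X, (∀ z : Z, R₀ z ∈ A.domain) ∧
      (∀ (z : Z) (h : R₀ z ∈ A.domain), (l₀ : ℂ) • E (R₀ z) - A ⟨R₀ z, h⟩ = z) ∧
      (∀ x : A.domain, R₀ ((l₀ : ℂ) • E (x : X) - A x) = x))
    (hdiss : ∀ x : A.domain, (⟪A x, E (x : X)⟫_ℂ).re ≤ 0) :
    ∀ l : ℝ, 0 < l →
      ∃ R : Z →L[ℂ] X, (∀ z : Z, R z ∈ A.domain) ∧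
        (∀ (z : Z) (h : R z ∈ A.domain), (l : ℂ) • E (R z) - A ⟨R z, h⟩ = z) ∧
        (∀ x : A.domain, R ((l : ℂ) • E (x : X) - A x) = x) ∧
        ‖E.comp R‖ ≤ 1 / l := by
  have hresolvent : ∀ l : ℝ, 0 < l → ∃ R, IsResolventAt E A (l : ℂ) R :=
    forall_pos_of_imp_Ioo_two_mul hl₀ hres fun m hm ⟨R, hR⟩ l hl =>
      hR.exists_of_re_inner_nonpos hdiss hm hl
  intro l hl
  obtain ⟨R, hR⟩ := hresolvent l hl
  exact ⟨R, hR.1, hR.2.1, hR.2.2, hR.opNorm_comp_le_of_re_inner_nonpos hdiss hl⟩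

/-- If some `λ > 0` lies in `ϱ(E,A)` and `Re⟨Ax, Ex⟩ ≤ 0` on `D(A)`, then every
`λ > 0` lies in `ϱ(E,A)` and `‖E(λE−A)⁻¹‖ ≤ 1/λ`. -/
theorem stmt5 {X Z : Type*}
    [NormedAddCommGroup X] [InnerProductSpace ℂ X] [CompleteSpace X]
    [NormedAddCommGroup Z] [InnerProductSpace ℂ Z] [CompleteSpace Z]
    (E : X →L[ℂ] Z) (A : X →ₗ.[ℂ] Z)
    (hdense : Dense (A.domain : Set X))
    (hclosed : IsClosed (A.graph : Set (X × Z)))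
    (l₀ : ℝ) (hl₀ : 0 < l₀)
    (hres : ∃ R₀ : Z →L[ℂ] X, (∀ z : Z, R₀ z ∈ A.domain) ∧
      (∀ (z : Z) (h : R₀ z ∈ A.domain), (l₀ : ℂ) • E (R₀ z) - A ⟨R₀ z, h⟩ = z) ∧
      (∀ x : A.domain, R₀ ((l₀ : ℂ) • E (x : X) - A x) = x))
    (hdiss : ∀ x : A.domain, (⟪A x, E (x : X)⟫_ℂ).re ≤ 0) :
    ∀ l : ℝ, 0 < l →
      ∃ R : Z →L[ℂ] X, (∀ z : Z, R z ∈ A.domain) ∧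
        (∀ (z : Z) (h : R z ∈ A.domain), (l : ℂ) • E (R z) - A ⟨R z, h⟩ = z) ∧
        (∀ x : A.domain, R ((l : ℂ) • E (x : X) - A x) = x) ∧
        ‖E.comp R‖ ≤ 1 / l :=
  stmt5_general E A l₀ hl₀ hres hdiss
end

section
/- Let E ∈ L(X,Z) and A densely defined and closed with λ ∈ ϱ(E,A) for some λ > 0. If Re⟨Ax,Ex⟩_Z ≤ 0 for all x ∈ D(A) and Re⟨A*z,E*z⟩_X ≤ 0 for all z ∈ D(A*), then (0,∞) ⊆ ϱ(E,A), ‖E(λE−A)⁻¹‖ ≤ 1/λ and ‖(λE−A)⁻¹E‖ ≤ 1/λ for all λ > 0; in particular A is E-radial with constant K = 1: ‖((λE−A)⁻¹E)ⁿ‖ ≤ λ⁻ⁿ and ‖(E(λE−A)⁻¹)ⁿ‖ ≤ λ⁻ⁿ for all n ∈ ℕ and λ > 0. -/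
open scoped InnerProductSpace

section Aux

lemma key_ineq {H : Type*} [NormedAddCommGroup H] [InnerProductSpace ℂ H]
    (l : ℝ) (hl : 0 < l) (u v w : H) (hw : (l : ℂ) • u - v = w)
    (hd : (⟪v, u⟫_ℂ).re ≤ 0) : ‖u‖ ≤ (1 / l) * ‖w‖ := by
  have h1 : (⟪w, u⟫_ℂ).re = l * ‖u‖ ^ 2 - (⟪v, u⟫_ℂ).re := by
    rw [← hw, inner_sub_left, inner_smul_left, Complex.conj_ofReal]
    have : ((l : ℂ) * ⟪u, u⟫_ℂ).re = l * (⟪u, u⟫_ℂ).re := by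
      simp [Complex.mul_re]
    simp only [Complex.sub_re, this]
    congr 1
    rw [← inner_self_eq_norm_sq (𝕜 := ℂ)]
    rfl
  have h2 : (⟪w, u⟫_ℂ).re ≤ ‖w‖ * ‖u‖ := re_inner_le_norm (𝕜 := ℂ) w u
  have h3 : l * ‖u‖ ^ 2 ≤ ‖w‖ * ‖u‖ := by linarith
  rcases eq_or_lt_of_le (norm_nonneg u) with h | h
  · rw [← h]; positivity
  · have h4 : l * ‖u‖ ≤ ‖w‖ := by
      have := mul_le_mul_of_nonneg_right h3 (le_of_lt (inv_pos.mpr h))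
      nlinarith
    rw [one_div, inv_mul_eq_div, le_div_iff₀ hl]
    linarith

variable {X Z : Type*}
    [NormedAddCommGroup X] [InnerProductSpace ℂ X] [CompleteSpace X]
    [NormedAddCommGroup Z] [InnerProductSpace ℂ Z] [CompleteSpace Z]
    (E : X →L[ℂ] Z) (A : X →ₗ.[ℂ] Z)

lemma bd1 (hdiss : ∀ x : A.domain, (⟪A x, E (x : X)⟫_ℂ).re ≤ 0)
    (l : ℝ) (hl : 0 < l) (R : Z →L[ℂ] X)
    (hmem : ∀ z : Z, R z ∈ A.domain)
    (hsolve : ∀ (z : Z) (h : R z ∈ A.domain), (l : ℂ) • E (R z) - A ⟨R z, h⟩ = z) :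
    ‖E.comp R‖ ≤ 1 / l := by
  apply ContinuousLinearMap.opNorm_le_bound _ (by positivity)
  intro z
  have := key_ineq l hl (E (R z)) (A ⟨R z, hmem z⟩) z (hsolve z (hmem z))
    (hdiss ⟨R z, hmem z⟩)
  simpa using this

lemma bd2 (hdense : Dense (A.domain : Set X))
    (hdiss' : ∀ z : A.adjoint.domain,
      (⟪A.adjoint z, (ContinuousLinearMap.adjoint E) (z : Z)⟫_ℂ).re ≤ 0)
    (l : ℝ) (hl : 0 < l) (R : Z →L[ℂ] X)
    (hinv : ∀ x : A.domain, R ((l : ℂ) • E (x : X) - A x) = x) :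
    ‖R.comp E‖ ≤ 1 / l := by
  have key : ∀ y : X,
      ‖(ContinuousLinearMap.adjoint E) ((ContinuousLinearMap.adjoint R) y)‖ ≤ (1 / l) * ‖y‖ := by
    intro y
    set w : Z := (ContinuousLinearMap.adjoint R) y with hwdef
    set x₀ : X := (l : ℂ) • (ContinuousLinearMap.adjoint E) w - y with hx₀
    have hch : ∀ x : A.domain, ⟪x₀, (x : X)⟫_ℂ = ⟪w, A x⟫_ℂ := by
      intro x
      have h1 : ⟪w, (l : ℂ) • E (x : X) - A x⟫_ℂ = ⟪y, (x : X)⟫_ℂ := by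
        rw [hwdef, ContinuousLinearMap.adjoint_inner_left, hinv x]
      rw [inner_sub_right, inner_smul_right] at h1
      rw [hx₀, inner_sub_left, inner_smul_left, Complex.conj_ofReal,
        ContinuousLinearMap.adjoint_inner_left]
      linear_combination h1
    have hmem : w ∈ A.adjoint.domain :=
      LinearPMap.mem_adjoint_domain_of_exists _ ⟨x₀, hch⟩
    have happly : A.adjoint ⟨w, hmem⟩ = x₀ :=
      LinearPMap.adjoint_apply_eq hdense _ hch
    have hd := hdiss' ⟨w, hmem⟩
    rw [happly] at hd
    exact key_ineq l hl ((ContinuousLinearMap.adjoint E) w) x₀ y (by rw [hx₀]; abel) hd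
  calc ‖R.comp E‖ = ‖ContinuousLinearMap.adjoint (R.comp E)‖ :=
        (ContinuousLinearMap.adjoint.norm_map (R.comp E)).symm
    _ = ‖(ContinuousLinearMap.adjoint E).comp (ContinuousLinearMap.adjoint R)‖ := by
        rw [ContinuousLinearMap.adjoint_comp]
    _ ≤ 1 / l := ContinuousLinearMap.opNorm_le_bound _ (by positivity) (fun y => by
        simpa using key y)

lemma step (hdiss : ∀ x : A.domain, (⟪A x, E (x : X)⟫_ℂ).re ≤ 0)
    (l m : ℝ) (hl : 0 < l) (hm : 0 < m) (hml : m < 2 * l)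
    (h : InResolvent E A (l : ℂ)) : InResolvent E A (m : ℂ) := by
  obtain ⟨R, hmem, hsolve, hinv⟩ := h
  have hER : ‖E.comp R‖ ≤ 1 / l := bd1 E A hdiss l hl R hmem hsolve
  set c : ℂ := ((m - l : ℝ) : ℂ) with hc
  have hnorm : ‖-(c • (E.comp R))‖ < 1 := by
    rw [norm_neg, norm_smul]
    have h1 : ‖c‖ = |m - l| := by rw [hc, Complex.norm_real, Real.norm_eq_abs]
    have h2 : |m - l| < l := abs_lt.mpr ⟨by linarith, by linarith⟩
    calc ‖c‖ * ‖E.comp R‖ ≤ |m - l| * (1 / l) := by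
          rw [h1]; exact mul_le_mul_of_nonneg_left hER (abs_nonneg _)
      _ < l * (1 / l) := by
          apply mul_lt_mul_of_pos_right h2 (by positivity)
      _ = 1 := by field_simp
  set u : (Z →L[ℂ] Z)ˣ := Units.oneSub _ hnorm with hu
  have huval : (u : Z →L[ℂ] Z) = 1 + c • (E.comp R) := by
    rw [hu, Units.val_oneSub, sub_neg_eq_add]
  set S : Z →L[ℂ] X := R.comp (↑u⁻¹ : Z →L[ℂ] Z) with hS
  have hSmem : ∀ z : Z, S z ∈ A.domain := fun z => hmem _
  have hsplit : ∀ (v : Z) (a : Z), (m : ℂ) • v - a = c • v + ((l : ℂ) • v - a) := by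
    intro v a
    have : (m : ℂ) • v = c • v + (l : ℂ) • v := by
      rw [← add_smul, hc]
      norm_num
    rw [this]; abel
  refine ⟨S, hSmem, ?_, ?_⟩
  · intro z h
    set wz : Z := (↑u⁻¹ : Z →L[ℂ] Z) z with hwz
    have h2 : (l : ℂ) • E (R wz) - A ⟨R wz, hmem wz⟩ = wz := hsolve wz (hmem wz)
    have hSz : A ⟨S z, h⟩ = A ⟨R wz, hmem wz⟩ := by rfl
    have : (m : ℂ) • E (S z) - A ⟨S z, h⟩ = c • E (R wz) + wz := by
      rw [hSz]
      have hSapp : E (S z) = E (R wz) := rfl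
      rw [hSapp, hsplit, h2]
    rw [this]
    have : c • E (R wz) + wz = ((↑u : Z →L[ℂ] Z) * (↑u⁻¹ : Z →L[ℂ] Z)) z := by
      rw [ContinuousLinearMap.mul_apply, huval]
      simp [hwz, add_comm]
    rw [this, u.mul_inv, ContinuousLinearMap.one_apply]
  · intro x
    set y : Z := (l : ℂ) • E (x : X) - A x with hy
    have hRy : R y = (x : X) := hinv x
    have h3 : (m : ℂ) • E (x : X) - A x = (↑u : Z →L[ℂ] Z) y := by
      rw [hsplit, ← hy, huval]
      have : E ((x : X)) = E (R y) := by rw [hRy]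
      rw [this]
      simp [add_comm]
    rw [hS]
    show R ((↑u⁻¹ : Z →L[ℂ] Z) ((m : ℂ) • E (x : X) - A x)) = (x : X)
    rw [h3, ← ContinuousLinearMap.mul_apply, u.inv_mul, ContinuousLinearMap.one_apply, hRy]


lemma pow_bd {W : Type*} [NormedAddCommGroup W] [InnerProductSpace ℂ W] [CompleteSpace W]
    {b : ℝ} (T : W →L[ℂ] W) (hT : ‖T‖ ≤ b) (n : ℕ) : ‖T ^ n‖ ≤ b ^ n := by
  cases n with
  | zero =>
    simp only [pow_zero]
    rw [ContinuousLinearMap.one_def]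
    exact ContinuousLinearMap.norm_id_le
  | succ n =>
    calc ‖T ^ (n + 1)‖ ≤ ‖T‖ ^ (n + 1) := norm_pow_le' T n.succ_pos
      _ ≤ b ^ (n + 1) := pow_le_pow_left₀ (norm_nonneg T) hT _

end Aux

/-- If some `λ > 0` lies in `ϱ(E,A)`, `Re⟨Ax,Ex⟩ ≤ 0` on `D(A)` and
`Re⟨A*z,E*z⟩ ≤ 0` on `D(A*)`, then `(0,∞) ⊆ ϱ(E,A)` and for every `λ > 0` the resolvent
satisfies `‖(E(λE−A)⁻¹)ⁿ‖ ≤ λ⁻ⁿ` and `‖((λE−A)⁻¹E)ⁿ‖ ≤ λ⁻ⁿ` for all `n`; in particular `A` is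
`E`-radial with constant `K = 1`. -/
theorem stmt6 {X Z : Type*}
    [NormedAddCommGroup X] [InnerProductSpace ℂ X] [CompleteSpace X]
    [NormedAddCommGroup Z] [InnerProductSpace ℂ Z] [CompleteSpace Z]
    (E : X →L[ℂ] Z) (A : X →ₗ.[ℂ] Z)
    (hdense : Dense (A.domain : Set X))
    (hclosed : IsClosed (A.graph : Set (X × Z)))
    (l₀ : ℝ) (hl₀ : 0 < l₀) (hres : InResolvent E A (l₀ : ℂ))
    (hdiss : ∀ x : A.domain, (⟪A x, E (x : X)⟫_ℂ).re ≤ 0)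
    (hdiss' : ∀ z : A.adjoint.domain,
      (⟪A.adjoint z, (ContinuousLinearMap.adjoint E) (z : Z)⟫_ℂ).re ≤ 0) :
    ∀ l : ℝ, 0 < l →
      ∃ R : Z →L[ℂ] X, (∀ z : Z, R z ∈ A.domain) ∧
        (∀ (z : Z) (h : R z ∈ A.domain), (l : ℂ) • E (R z) - A ⟨R z, h⟩ = z) ∧
        (∀ x : A.domain, R ((l : ℂ) • E (x : X) - A x) = x) ∧
        (∀ n : ℕ, ‖(E.comp R) ^ n‖ ≤ (1 / l) ^ n) ∧
        (∀ n : ℕ, ‖(R.comp E) ^ n‖ ≤ (1 / l) ^ n) := by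
  -- resolvent set is all of (0,∞), by a doubling induction from l₀
  have main : ∀ n : ℕ, ∀ m : ℝ, 0 < m → m < 2 ^ n * l₀ → InResolvent E A (m : ℂ) := by
    intro n
    induction n with
    | zero =>
      intro m hm hlt
      exact step E A hdiss l₀ m hl₀ hm (by norm_num at hlt; linarith) hres
    | succ n ih =>
      intro m hm hlt
      rcases lt_or_ge m (2 ^ n * l₀) with h | h
      · exact ih m hm h
      · have hpos : (0:ℝ) < 2 ^ n * l₀ := by positivity
        set l : ℝ := (m / 2 + 2 ^ n * l₀) / 2 with hldef
        have hm2 : m / 2 < 2 ^ n * l₀ := by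
          rw [pow_succ] at hlt; linarith
        have hl1 : m / 2 < l := by rw [hldef]; linarith
        have hl2 : l < 2 ^ n * l₀ := by rw [hldef]; linarith
        have hlpos : 0 < l := by rw [hldef]; linarith
        exact step E A hdiss l m hlpos hm (by linarith) (ih l hlpos hl2)
  intro l hl
  obtain ⟨n, hn⟩ : ∃ n : ℕ, l / l₀ < 2 ^ n := pow_unbounded_of_one_lt (l / l₀) one_lt_two
  have hres' : InResolvent E A (l : ℂ) :=
    main n l hl (by rw [div_lt_iff₀ hl₀] at hn; linarith)
  obtain ⟨R, hmem, hsolve, hinv⟩ := hres'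
  have hER : ‖E.comp R‖ ≤ 1 / l := bd1 E A hdiss l hl R hmem hsolve
  have hRE : ‖R.comp E‖ ≤ 1 / l := bd2 E A hdense hdiss' l hl R hinv
  exact ⟨R, hmem, hsolve, hinv, pow_bd (E.comp R) hER, pow_bd (R.comp E) hRE⟩
end

section
/- If λ ∈ ϱ(E,A) for some λ > 0 and Re⟨Ax,Ex⟩_Z ≤ 0 for all x ∈ D(A), then (0,∞) ⊆ ϱ(E*,A*), i.e., for every λ > 0 the operator λE* − A* has a bounded inverse from X to Z. -/
open scoped InnerProductSpace

lemma diss_bound {X Z : Type*}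
    [NormedAddCommGroup X] [InnerProductSpace ℂ X]
    [NormedAddCommGroup Z] [InnerProductSpace ℂ Z]
    (E : X →L[ℂ] Z) (A : X →ₗ.[ℂ] Z)
    (hdiss : ∀ x : A.domain, (⟪A x, E (x : X)⟫_ℂ).re ≤ 0)
    (l : ℝ) (hl : 0 < l) (x : A.domain) :
    l * ‖E (x : X)‖ ≤ ‖(l : ℂ) • E (x : X) - A x‖ := by
  set v := E (x : X)
  set a := A x
  have h1 : ((⟪(l : ℂ) • v - a, v⟫_ℂ)).re = l * ‖v‖ ^ 2 - (⟪a, v⟫_ℂ).re := by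
    rw [inner_sub_left, inner_smul_left, inner_self_eq_norm_sq_to_K]
    simp [Complex.sub_re, Complex.mul_re]
    left
    norm_cast
  have h2 : (⟪(l : ℂ) • v - a, v⟫_ℂ).re ≤ ‖(l : ℂ) • v - a‖ * ‖v‖ := by
    have := re_inner_le_norm (𝕜 := ℂ) ((l : ℂ) • v - a) v
    exact this
  have h3 : l * ‖v‖ ^ 2 ≤ ‖(l : ℂ) • v - a‖ * ‖v‖ := by
    have := hdiss x
    rw [h1] at h2
    linarith
  rcases eq_or_lt_of_le (norm_nonneg v) with hv | hv
  · rw [← hv, mul_zero]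
    exact norm_nonneg _
  · nlinarith [h3, hv]

lemma res_step {X Z : Type*}
    [NormedAddCommGroup X] [InnerProductSpace ℂ X] [CompleteSpace X]
    [NormedAddCommGroup Z] [InnerProductSpace ℂ Z] [CompleteSpace Z]
    (E : X →L[ℂ] Z) (A : X →ₗ.[ℂ] Z)
    (hdiss : ∀ x : A.domain, (⟪A x, E (x : X)⟫_ℂ).re ≤ 0)
    (lam mu : ℝ) (hlam : 0 < lam) (hmu : 0 < mu) (hnear : |mu - lam| < lam)
    (hres : InResolvent E A (lam : ℂ)) : InResolvent E A (mu : ℂ) := by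
  obtain ⟨R, hmem, hsolve, hinv⟩ := hres
  set T : Z →L[ℂ] Z := E.comp R with hTdef
  have hTz : ∀ z : Z, lam * ‖T z‖ ≤ ‖z‖ := by
    intro z
    have h1 := diss_bound E A hdiss lam hlam ⟨R z, hmem z⟩
    have h2 := hsolve z (hmem z)
    calc lam * ‖T z‖ = lam * ‖E ((⟨R z, hmem z⟩ : A.domain) : X)‖ := rfl
      _ ≤ ‖(lam : ℂ) • E (R z) - A ⟨R z, hmem z⟩‖ := h1
      _ = ‖z‖ := by rw [h2]
  have hT : ‖T‖ ≤ 1 / lam := by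
    apply ContinuousLinearMap.opNorm_le_bound _ (by positivity)
    intro z
    have := hTz z
    rw [div_mul_eq_mul_div, le_div_iff₀ hlam, one_mul, mul_comm]
    exact this
  set c : ℂ := (mu : ℂ) - (lam : ℂ) with hcdef
  have hc : ‖c‖ = |mu - lam| := by
    rw [show c = ((mu - lam : ℝ) : ℂ) by push_cast [hcdef]; ring]
    rw [Complex.norm_real, Real.norm_eq_abs]
  have hsmall : ‖-(c • T)‖ < 1 := by
    rw [norm_neg, norm_smul, hc]
    have h0 : (0:ℝ) ≤ |mu - lam| := abs_nonneg _
    have h1 := mul_le_mul_of_nonneg_left hT h0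
    have h2 : |mu - lam| * (1 / lam) < lam * (1 / lam) :=
      mul_lt_mul_of_pos_right hnear (by positivity)
    have h3 : lam * (1 / lam) = 1 := by field_simp
    linarith
  set u : (Z →L[ℂ] Z)ˣ := Units.oneSub (-(c • T)) hsmall with hudef
  have huval : (↑u : Z →L[ℂ] Z) = 1 + c • T := by
    show (1 : Z →L[ℂ] Z) - -(c • T) = 1 + c • T
    rw [sub_neg_eq_add]
  set S : Z →L[ℂ] X := R.comp (↑u⁻¹ : Z →L[ℂ] Z) with hSdef
  refine ⟨S, fun z => hmem _, ?_, ?_⟩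
  · intro z h
    set w := (↑u⁻¹ : Z →L[ℂ] Z) z with hw
    have hSz : S z = R w := rfl
    have h2 := hsolve w (hmem w)
    have hsub : (⟨S z, h⟩ : A.domain) = ⟨R w, hmem w⟩ := Subtype.ext hSz
    rw [hsub, hSz]
    have expand : (mu : ℂ) • E (R w) - A ⟨R w, hmem w⟩ = w + c • T w := by
      have hmusplit : (mu : ℂ) • E (R w) = (lam : ℂ) • E (R w) + c • E (R w) := by
        rw [← add_smul]
        congr 1
        rw [hcdef]; ring
      rw [hmusplit, add_sub_right_comm, h2]
      rfl
    rw [expand]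
    have hup : w + c • T w = (↑u : Z →L[ℂ] Z) w := by
      rw [huval]
      simp
    rw [hup, hw]
    show ((↑u * ↑u⁻¹ : Z →L[ℂ] Z)) z = z
    rw [u.mul_inv]
    rfl
  · intro x
    have h3 : T ((lam : ℂ) • E (x : X) - A x) = E (x : X) := by
      show E (R ((lam : ℂ) • E (x : X) - A x)) = E (x : X)
      rw [hinv x]
    have h2 : (↑u : Z →L[ℂ] Z) ((lam : ℂ) • E (x : X) - A x)
        = (mu : ℂ) • E (x : X) - A x := by
      rw [huval]
      simp only [ContinuousLinearMap.add_apply, ContinuousLinearMap.one_apply,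
        ContinuousLinearMap.smul_apply]
      rw [h3, sub_add_eq_add_sub, ← add_smul]
      congr 2
      rw [hcdef]; ring
    calc S ((mu : ℂ) • E (x : X) - A x)
        = R ((↑u⁻¹ : Z →L[ℂ] Z) ((↑u : Z →L[ℂ] Z) ((lam : ℂ) • E (x : X) - A x))) := by
          rw [h2]
          rfl
      _ = R ((lam : ℂ) • E (x : X) - A x) := by
          congr 1
          show ((↑u⁻¹ * ↑u : Z →L[ℂ] Z)) _ = _
          rw [u.inv_mul]
          rfl
      _ = x := hinv x

lemma res_all {X Z : Type*}
    [NormedAddCommGroup X] [InnerProductSpace ℂ X] [CompleteSpace X]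
    [NormedAddCommGroup Z] [InnerProductSpace ℂ Z] [CompleteSpace Z]
    (E : X →L[ℂ] Z) (A : X →ₗ.[ℂ] Z)
    (hdiss : ∀ x : A.domain, (⟪A x, E (x : X)⟫_ℂ).re ≤ 0)
    (l₀ : ℝ) (hl₀ : 0 < l₀) (hres : InResolvent E A (l₀ : ℂ)) :
    ∀ l : ℝ, 0 < l → InResolvent E A (l : ℂ) := by
  have pow : ∀ n : ℕ, InResolvent E A ((((3/2 : ℝ)^n * l₀ : ℝ)) : ℂ) := by
    intro n
    induction n with
    | zero => simpa using hres
    | succ n ih =>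
        have hp : (0:ℝ) < (3/2 : ℝ)^n * l₀ := by positivity
        apply res_step E A hdiss ((3/2 : ℝ)^n * l₀) _ hp (by positivity) _ ih
        rw [abs_lt, pow_succ]
        constructor <;> nlinarith [hp]
  intro l hl
  obtain ⟨n, hn⟩ := pow_unbounded_of_one_lt (l / l₀) (by norm_num : (1:ℝ) < 3/2)
  have hlt : l < (3/2 : ℝ)^n * l₀ := by
    rw [div_lt_iff₀ hl₀] at hn
    linarith
  have hp : (0:ℝ) < (3/2 : ℝ)^n * l₀ := by positivity
  apply res_step E A hdiss ((3/2 : ℝ)^n * l₀) l hp hl _ (pow n)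
  rw [abs_lt]
  constructor <;> nlinarith

lemma res_adjoint {X Z : Type*}
    [NormedAddCommGroup X] [InnerProductSpace ℂ X] [CompleteSpace X]
    [NormedAddCommGroup Z] [InnerProductSpace ℂ Z] [CompleteSpace Z]
    (E : X →L[ℂ] Z) (A : X →ₗ.[ℂ] Z)
    (hdense : Dense (A.domain : Set X))
    (l : ℝ) (hres : InResolvent E A (l : ℂ)) :
    InResolvent (ContinuousLinearMap.adjoint E) A.adjoint (l : ℂ) := by
  obtain ⟨R, hmem, hsolve, hinv⟩ := hres
  set R' : X →L[ℂ] Z := ContinuousLinearMap.adjoint R with hR'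
  set E' : Z →L[ℂ] X := ContinuousLinearMap.adjoint E with hE'
  have hip : ∀ (x : X) (v : A.domain),
      ⟪((l : ℂ) • E' (R' x) - x : X), (v : X)⟫_ℂ = ⟪R' x, A v⟫_ℂ := by
    intro x v
    have e1 : ⟪R' x, A v⟫_ℂ
        = (l : ℂ) * ⟪R' x, E (v : X)⟫_ℂ - ⟪R' x, (l : ℂ) • E (v : X) - A v⟫_ℂ := by
      rw [inner_sub_right, inner_smul_right]
      ring
    have e2 : ⟪R' x, (l : ℂ) • E (v : X) - A v⟫_ℂ = ⟪x, (v : X)⟫_ℂ := by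
      rw [ContinuousLinearMap.adjoint_inner_left, hinv v]
    have e3 : ⟪R' x, E (v : X)⟫_ℂ = ⟪E' (R' x), (v : X)⟫_ℂ :=
      (ContinuousLinearMap.adjoint_inner_left E (v : X) (R' x)).symm
    rw [e1, e2, e3, inner_sub_left, inner_smul_left, Complex.conj_ofReal]
  have hdom : ∀ x : X, R' x ∈ A.adjoint.domain := by
    intro x
    exact LinearPMap.mem_adjoint_domain_of_exists _
      ⟨(l : ℂ) • E' (R' x) - x, fun v => hip x v⟩
  have happly : ∀ (x : X) (h : R' x ∈ A.adjoint.domain),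
      A.adjoint ⟨R' x, h⟩ = (l : ℂ) • E' (R' x) - x := by
    intro x h
    exact LinearPMap.adjoint_apply_eq hdense ⟨R' x, h⟩ (fun v => hip x v)
  refine ⟨R', fun x => hdom x, ?_, ?_⟩
  · intro x h
    rw [happly x h]
    exact sub_sub_cancel _ _
  · intro y
    apply ext_inner_right (𝕜 := ℂ)
    intro v
    have hv := hsolve v (hmem v)
    set uu : A.domain := ⟨R v, hmem v⟩ with huu
    calc ⟪R' ((l : ℂ) • E' (y : Z) - A.adjoint y), v⟫_ℂ
        = ⟪((l : ℂ) • E' (y : Z) - A.adjoint y : X), R v⟫_ℂ :=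
          ContinuousLinearMap.adjoint_inner_left R v _
      _ = (l : ℂ) * ⟪E' (y : Z), R v⟫_ℂ - ⟪A.adjoint y, R v⟫_ℂ := by
          rw [inner_sub_left, inner_smul_left, Complex.conj_ofReal]
      _ = (l : ℂ) * ⟪(y : Z), E (R v)⟫_ℂ - ⟪(y : Z), A uu⟫_ℂ := by
          rw [ContinuousLinearMap.adjoint_inner_left E (R v) (y : Z)]
          congr 1
          exact LinearPMap.adjoint_isFormalAdjoint hdense y uu
      _ = ⟪(y : Z), (l : ℂ) • E (R v) - A uu⟫_ℂ := by
          rw [inner_sub_right, inner_smul_right]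
      _ = ⟪(y : Z), v⟫_ℂ := by
          rw [show (l : ℂ) • E (R v) - A uu = v from hv]

/-- If `λ ∈ ϱ(E,A)` for some `λ > 0` and `Re⟨Ax,Ex⟩ ≤ 0` on `D(A)`, then
`(0,∞) ⊆ ϱ(E*,A*)`, i.e. for every `λ > 0` the operator `λE* − A*` has a bounded inverse. -/
theorem stmt7 {X Z : Type*}
    [NormedAddCommGroup X] [InnerProductSpace ℂ X] [CompleteSpace X]
    [NormedAddCommGroup Z] [InnerProductSpace ℂ Z] [CompleteSpace Z]
    (E : X →L[ℂ] Z) (A : X →ₗ.[ℂ] Z)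
    (hdense : Dense (A.domain : Set X))
    (hclosed : IsClosed (A.graph : Set (X × Z)))
    (l₀ : ℝ) (hl₀ : 0 < l₀) (hres : InResolvent E A (l₀ : ℂ))
    (hdiss : ∀ x : A.domain, (⟪A x, E (x : X)⟫_ℂ).re ≤ 0) :
    ∀ l : ℝ, 0 < l → InResolvent (ContinuousLinearMap.adjoint E) A.adjoint (l : ℂ) := by
  intro l hl
  exact res_adjoint E A hdense l (res_all E A hdiss l₀ hl₀ hres l hl)
end

section
/- Suppose A is weakly E-radial, and the strong limits Px = lim_{s→∞} s(sE−A)⁻¹E x and Qz = lim_{s→∞} sE(sE−A)⁻¹ z exist for all x ∈ X, z ∈ Z, with P, Q bounded projections. Then for every x ∈ D(A), Px ∈ D(A) and APx = QAx; and for every x ∈ X, EPx = QEx. -/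
open Filter

/-- Suppose `A` is weakly `E`-radial, with resolvent family `R s = (sE−A)⁻¹` for
`s > 0`, and suppose the strong limits `Px = lim_{s→∞} s(sE−A)⁻¹Ex` and
`Qz = lim_{s→∞} sE(sE−A)⁻¹z` exist, with `P`, `Q` bounded projections. Then for every
`x ∈ D(A)`, `Px ∈ D(A)` and `APx = QAx`; and `EPx = QEx` for every `x ∈ X`. -/
theorem stmt9 {X Z : Type*}
    [NormedAddCommGroup X] [InnerProductSpace ℂ X] [CompleteSpace X]
    [NormedAddCommGroup Z] [InnerProductSpace ℂ Z] [CompleteSpace Z]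
    (E : X →L[ℂ] Z) (A : X →ₗ.[ℂ] Z)
    (hdense : Dense (A.domain : Set X))
    (hclosed : IsClosed (A.graph : Set (X × Z)))
    (R : ℝ → (Z →L[ℂ] X)) (K : ℝ) (hK : 0 < K)
    (hmem : ∀ s : ℝ, 0 < s → ∀ z : Z, R s z ∈ A.domain)
    (hright : ∀ s : ℝ, 0 < s → ∀ (z : Z) (h : R s z ∈ A.domain),
      (s : ℂ) • E (R s z) - A ⟨R s z, h⟩ = z)
    (hleft : ∀ s : ℝ, 0 < s → ∀ x : A.domain, R s ((s : ℂ) • E (x : X) - A x) = x)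
    (hradR : ∀ s : ℝ, 0 < s → ‖(R s).comp E‖ ≤ K / s)
    (hradL : ∀ s : ℝ, 0 < s → ‖E.comp (R s)‖ ≤ K / s)
    (P : X →L[ℂ] X) (Q : Z →L[ℂ] Z)
    (hPproj : P.comp P = P) (hQproj : Q.comp Q = Q)
    (hP : ∀ x : X, Tendsto (fun s : ℝ => (s : ℂ) • R s (E x)) atTop (nhds (P x)))
    (hQ : ∀ z : Z, Tendsto (fun s : ℝ => (s : ℂ) • E (R s z)) atTop (nhds (Q z))) :
    (∀ x : A.domain, ∃ h : P (x : X) ∈ A.domain, A ⟨P (x : X), h⟩ = Q (A x)) ∧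
    (∀ x : X, E (P x) = Q (E x)) := by
  constructor
  · intro x
    -- for each s > 0, (s • R s (E x), s • E (R s (A x))) ∈ graph A
    have key : ∀ s : ℝ, 0 < s →
        ((s : ℂ) • R s (E (x : X)), (s : ℂ) • E (R s (A x))) ∈ A.graph := by
      intro s hs
      have hm0 := hmem s hs (E (x : X))
      have hm : ((s : ℂ) • R s (E (x : X))) ∈ A.domain := A.domain.smul_mem _ hm0
      -- intertwining : s • R s (E x) = x + R s (A x)
      have hint : (s : ℂ) • R s (E (x : X)) = (x : X) + R s (A x) := by
        have h := hleft s hs x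
        have h2 : R s ((s : ℂ) • E (x : X)) - R s (A x) = (x : X) := by
          simpa [map_sub] using h
        have h3 : (s : ℂ) • R s (E (x : X)) = R s ((s : ℂ) • E (x : X)) :=
          (map_smul (R s) _ _).symm
        rw [sub_eq_iff_eq_add] at h2
        rw [h3, h2]
      have hval : A ⟨(s : ℂ) • R s (E (x : X)), hm⟩ = (s : ℂ) • E (R s (A x)) := by
        have hsm : (⟨(s : ℂ) • R s (E (x : X)), hm⟩ : A.domain)
            = (s : ℂ) • (⟨R s (E (x : X)), hm0⟩ : A.domain) := by
          ext; rfl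
        rw [hsm, A.map_smul]
        have hr : A ⟨R s (E (x : X)), hm0⟩ = (s : ℂ) • E (R s (E (x : X))) - E (x : X) := by
          have := hright s hs (E (x : X)) hm0
          rw [sub_eq_iff_eq_add] at this
          rw [this]; abel
        rw [hr]
        have hE : (s : ℂ) • E (R s (E (x : X))) = E (x : X) + E (R s (A x)) := by
          calc (s : ℂ) • E (R s (E (x : X))) = E ((s : ℂ) • R s (E (x : X))) := by
                rw [map_smul]
            _ = E (x : X) + E (R s (A x)) := by rw [hint, map_add]
        rw [hE]
        simp [smul_sub]
      rw [LinearPMap.mem_graph_iff]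
      exact ⟨⟨(s : ℂ) • R s (E (x : X)), hm⟩, rfl, hval⟩
    have htend : Tendsto (fun s : ℝ => ((s : ℂ) • R s (E (x : X)), (s : ℂ) • E (R s (A x))))
        atTop (nhds (P (x : X), Q (A x))) :=
      (hP (x : X)).prodMk_nhds (hQ (A x))
    have hev : ∀ᶠ s : ℝ in atTop,
        ((s : ℂ) • R s (E (x : X)), (s : ℂ) • E (R s (A x))) ∈ (A.graph : Set (X × Z)) := by
      filter_upwards [eventually_gt_atTop (0 : ℝ)] with s hs using key s hs
    have hmemgr : (P (x : X), Q (A x)) ∈ (A.graph : Set (X × Z)) :=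
      hclosed.mem_of_tendsto htend hev
    rw [SetLike.mem_coe, LinearPMap.mem_graph_iff] at hmemgr
    obtain ⟨y, hy1, hy2⟩ := hmemgr
    have hy1' : (y : X) = P (x : X) := hy1
    refine ⟨hy1' ▸ y.2, ?_⟩
    have : (⟨P (x : X), hy1' ▸ y.2⟩ : A.domain) = y := by ext; exact hy1'.symm
    rw [this, hy2]
  · intro x
    have h1 : Tendsto (fun s : ℝ => E ((s : ℂ) • R s (E x))) atTop (nhds (E (P x))) :=
      (E.continuous.tendsto _).comp (hP x)
    have h2 : (fun s : ℝ => E ((s : ℂ) • R s (E x)))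
        = fun s : ℝ => (s : ℂ) • E (R s (E x)) := by
      funext s; rw [map_smul]
    rw [h2] at h1
    exact tendsto_nhds_unique h1 (hQ (E x))
end

section
/- In the setting of the coupled system with E = [[I,0],[0,0]] and A = [[A₁,A₂],[A₃,A₄]], for every n ∈ ℕ, ((μE−A)⁻¹E)ⁿ = [[S₁(μ)⁻ⁿ, 0], [−A₄⁻¹A₃S₁(μ)⁻ⁿ, 0]] and (E(μE−A)⁻¹)ⁿ = [[S₁(μ)⁻ⁿ, −S₁(μ)⁻ⁿA₂A₄⁻¹], [0, 0]]. -/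
/-- A `2×2` block of bounded operators on `Z`, as a bounded operator on `Z × Z`. -/
def blk {Z : Type*} [NormedAddCommGroup Z] [NormedSpace ℂ Z]
    (a b c d : Z →L[ℂ] Z) : (Z × Z) →L[ℂ] (Z × Z) :=
  ((a.comp (ContinuousLinearMap.fst ℂ Z Z)) + (b.comp (ContinuousLinearMap.snd ℂ Z Z))).prod
    ((c.comp (ContinuousLinearMap.fst ℂ Z Z)) + (d.comp (ContinuousLinearMap.snd ℂ Z Z)))

lemma blk_mul {Z : Type*} [NormedAddCommGroup Z] [NormedSpace ℂ Z]
    (a b c d a' b' c' d' : Z →L[ℂ] Z) :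
    blk a b c d * blk a' b' c' d'
      = blk (a * a' + b * c') (a * b' + b * d') (c * a' + d * c') (c * b' + d * d') := by
  ext x <;>
  simp [blk, ContinuousLinearMap.mul_apply]

/-- For the coupled system with `E = [[I,0],[0,0]]`, `A = [[A₁,A₂],[A₃,A₄]]`,
`S = S₁(μ)⁻¹`, one has for every `n ≥ 1`:
`((μE−A)⁻¹E)ⁿ = [[Sⁿ, 0], [−A₄⁻¹A₃Sⁿ, 0]]` and
`(E(μE−A)⁻¹)ⁿ = [[Sⁿ, −SⁿA₂A₄⁻¹], [0, 0]]`. -/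
theorem stmt14 {Z : Type*}
    [NormedAddCommGroup Z] [InnerProductSpace ℂ Z] [CompleteSpace Z]
    (A₁ : Z →ₗ.[ℂ] Z)
    (hdense : Dense (A₁.domain : Set Z))
    (hclosed : IsClosed (A₁.graph : Set (Z × Z)))
    (A₂ A₃ A₄ A₄inv : Z →L[ℂ] Z)
    (hA₄l : A₄inv.comp A₄ = ContinuousLinearMap.id ℂ Z)
    (hA₄r : A₄.comp A₄inv = ContinuousLinearMap.id ℂ Z)
    (μ : ℂ) (S : Z →L[ℂ] Z)
    (hSmem : ∀ z : Z, S z ∈ A₁.domain)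
    (hSr : ∀ (z : Z) (h : S z ∈ A₁.domain),
      μ • S z - A₁ ⟨S z, h⟩ + A₂ (A₄inv (A₃ (S z))) = z)
    (hSl : ∀ x : A₁.domain, S (μ • (x : Z) - A₁ x + A₂ (A₄inv (A₃ (x : Z)))) = x) :
    ∀ n : ℕ, 1 ≤ n →
      (blk S 0 (-(A₄inv.comp (A₃.comp S))) 0) ^ n
          = blk (S ^ n) 0 (-(A₄inv.comp (A₃.comp (S ^ n)))) 0 ∧
      (blk S (-(S.comp (A₂.comp A₄inv))) 0 0) ^ n
          = blk (S ^ n) (-((S ^ n).comp (A₂.comp A₄inv))) 0 0 := by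
  intro n hn
  induction n with
  | zero => omega
  | succ m ih =>
    rcases Nat.eq_or_lt_of_le hn with h1 | h1
    · constructor <;> simp [← h1]
    · have hm : 1 ≤ m := by omega
      obtain ⟨ih1, ih2⟩ := ih hm
      constructor
      · rw [pow_succ, ih1, blk_mul]
        congr 1 <;>
        · ext x
          simp [ContinuousLinearMap.mul_apply, pow_succ]
      · rw [pow_succ, ih2, blk_mul]
        congr 1 <;>
        · ext x
          simp [ContinuousLinearMap.mul_apply, pow_succ]
end

section
/- For the Dzektser equation operators: with Z = L²(0,π), D(A) = {x ∈ H⁴(0,π) ∩ H¹₀(0,π) : x''(0) = x''(π) = 0}, Ex = x + x'' and Ax = x'' + 2x⁽⁴⁾, one has Re⟨Ax, Ex⟩_{L²} = −‖x'‖² + ‖x''‖² − 2‖x⁽³⁾‖² − 2Re∫₀^π x⁽³⁾ x̄' dζ ≤ ‖x''‖² − ‖x⁽³⁾‖² ≤ 0 for all x ∈ D(A). -/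
/-!
Integrating by parts against the boundary conditions turns `⟨Ax, Ex⟩` into the real number
`-‖x'‖² + 3‖x''‖² - 2‖x'''‖²`, and `∫ x''' x̄' = -‖x''‖²`; this gives the identity. The first
inequality is then `2‖x''‖² = -2 Re ∫ x''' x̄' ≤ ‖x'''‖² + ‖x'‖²`, the second is Wirtinger's
inequality `‖x''‖ ≤ ‖x'''‖` for `x''`, which vanishes at `0` and `π`.

Wirtinger's inequality comes from integrating
`(cot t ‖f t‖²)' = ‖f' t‖² - ‖f t‖² - ‖f' t - cot t • f t‖²` over `(0, π)`: since `f` vanishes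
at the endpoints, `cot t ‖f t‖²` extends continuously by `0` to `[0, π]`.
-/

open Real ComplexConjugate Filter Topology Set intervalIntegral

section Wirtinger

variable {E : Type*} [NormedAddCommGroup E] [InnerProductSpace ℝ E] {f : ℝ → E} {f' : E}

theorem hasDerivAt_cot_mul_norm_sq {t : ℝ} (hf : HasDerivAt f f' t) (ht : sin t ≠ 0) :
    HasDerivAt (fun s => cot s * ‖f s‖ ^ 2)
      (‖f'‖ ^ 2 - ‖f t‖ ^ 2 - ‖f' - cot t • f t‖ ^ 2) t := by
  have hcot : HasDerivAt cot (-(1 + cot t ^ 2)) t := by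
    rw [funext cot_eq_cos_div_sin]
    refine ((hasDerivAt_cos t).div (hasDerivAt_sin t) ht).congr_deriv ?_
    field_simp
    ring
  refine (hcot.mul hf.norm_sq).congr_deriv ?_
  rw [norm_sub_sq_real, inner_smul_right, norm_smul, real_inner_comm, Real.norm_eq_abs, mul_pow,
    sq_abs]
  ring

theorem continuousAt_zero_cot_mul_norm_sq (hf : HasDerivAt f f' 0) (h0 : f 0 = 0) :
    ContinuousAt (fun t => cot t * ‖f t‖ ^ 2) 0 := by
  rw [← continuousWithinAt_compl_self, ContinuousWithinAt]
  have hlim : Tendsto (fun t => cos t / sinc t * ‖slope f 0 t‖ ^ 2 * t) (𝓝[≠] 0)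
      (𝓝 (cos 0 / sinc 0 * ‖f'‖ ^ 2 * 0)) := by
    refine ((((continuous_cos.tendsto 0).div (continuous_sinc.tendsto 0) (by simp)).mono_left
      nhdsWithin_le_nhds).mul ((hasDerivAt_iff_tendsto_slope.mp hf).norm.pow 2)).mul ?_
    exact tendsto_nhdsWithin_of_tendsto_nhds tendsto_id
  simp only [mul_zero, h0, norm_zero, ne_eq, OfNat.ofNat_ne_zero, not_false_eq_true,
    zero_pow] at hlim ⊢
  refine hlim.congr' (eventually_nhdsWithin_of_forall fun t (ht : t ≠ 0) => ?_)
  dsimp only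
  rw [slope_def_module, h0, sub_zero, sub_zero, norm_smul, sinc_of_ne_zero ht, cot_eq_cos_div_sin,
    norm_inv, Real.norm_eq_abs]
  field_simp
  rw [sq_abs]

theorem continuousAt_pi_cot_mul_norm_sq (hf : HasDerivAt f f' π) (hπ : f π = 0) :
    ContinuousAt (fun t => cot t * ‖f t‖ ^ 2) π := by
  have hreflect : (fun t => cot t * ‖f t‖ ^ 2)
      = fun t => -(cot (π - t) * ‖f (π - (π - t))‖ ^ 2) := by
    ext t
    simp only [sub_sub_cancel, cot_eq_cos_div_sin, cos_pi_sub, sin_pi_sub]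
    ring
  have hzero : ContinuousAt (fun s => cot s * ‖f (π - s)‖ ^ 2) 0 :=
    continuousAt_zero_cot_mul_norm_sq (HasDerivAt.comp_const_sub π 0 (by rwa [sub_zero]))
      (by simpa using hπ)
  rw [hreflect]
  exact (hzero.comp_of_eq (continuous_sub_left π).continuousAt (sub_self π)).neg

theorem integral_norm_sq_le_integral_norm_deriv_sq (hf : ContDiff ℝ 1 f) (h0 : f 0 = 0)
    (hπ : f π = 0) : ∫ t in 0..π, ‖f t‖ ^ 2 ≤ ∫ t in 0..π, ‖deriv f t‖ ^ 2 := by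
  set G : ℝ → ℝ := fun t => cot t * ‖f t‖ ^ 2 with hG_def
  have hdiff : Differentiable ℝ f := hf.differentiable one_ne_zero
  have hφ : Continuous fun t => ‖f t‖ ^ 2 := by fun_prop
  have hψ : Continuous fun t => ‖deriv f t‖ ^ 2 := (hf.continuous_deriv le_rfl).norm.pow 2
  have hG : ∀ t ∈ Ioo 0 π, HasDerivAt G
      (‖deriv f t‖ ^ 2 - ‖f t‖ ^ 2 - ‖deriv f t - cot t • f t‖ ^ 2) t := fun t ht =>
    hasDerivAt_cot_mul_norm_sq (hdiff t).hasDerivAt (sin_pos_of_pos_of_lt_pi ht.1 ht.2).ne'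
  have hcont : ContinuousOn G (Icc 0 π) := by
    rintro t ⟨ht0, htπ⟩
    rcases ht0.eq_or_lt with rfl | ht0
    · exact (continuousAt_zero_cot_mul_norm_sq (hdiff 0).hasDerivAt h0).continuousWithinAt
    rcases htπ.eq_or_lt with rfl | htπ
    · exact (continuousAt_pi_cot_mul_norm_sq (hdiff π).hasDerivAt hπ).continuousWithinAt
    · exact (hG t ⟨ht0, htπ⟩).continuousAt.continuousWithinAt
  have key := sub_le_integral_of_hasDeriv_right_of_le (φ := fun t => ‖deriv f t‖ ^ 2 - ‖f t‖ ^ 2)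
    pi_pos.le hcont (fun t ht => (hG t ht).hasDerivWithinAt) (hψ.sub hφ).integrableOn_Icc
    (fun t _ => sub_le_self _ (sq_nonneg _))
  rw [integral_sub (hψ.intervalIntegrable _ _) (hφ.intervalIntegrable _ _)] at key
  simp only [hG_def, h0, hπ, norm_zero] at key
  linarith

end Wirtinger

section ComplexIntegrals

variable {f g : ℝ → ℂ} {a b : ℝ}

theorem integral_deriv_mul_conj (hf : ContDiff ℝ 1 f) (hg : ContDiff ℝ 1 g) :
    ∫ t in a..b, deriv f t * conj (g t)
      = f b * conj (g b) - f a * conj (g a) - ∫ t in a..b, f t * conj (deriv g t) := by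
  have hparts := integral_mul_deriv_eq_deriv_mul (a := a) (b := b) (u := f)
    (v := fun t => conj (g t)) (fun t _ => (hf.differentiable one_ne_zero t).hasDerivAt)
    (fun t _ => (hg.differentiable one_ne_zero t).hasDerivAt.star)
    ((hf.continuous_deriv le_rfl).intervalIntegrable _ _)
    ((hg.continuous_deriv le_rfl).star.intervalIntegrable _ _)
  simp only [Complex.star_def] at hparts
  linear_combination hparts

theorem integral_mul_conj_self (f : ℝ → ℂ) (a b : ℝ) :
    ∫ t in a..b, f t * conj (f t) = ((∫ t in a..b, ‖f t‖ ^ 2 : ℝ) : ℂ) := by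
  simp_rw [Complex.mul_conj', ← Complex.ofReal_pow, integral_ofReal]

theorem two_mul_norm_integral_mul_conj_le (hab : a ≤ b) (hf : Continuous f) (hg : Continuous g) :
    2 * ‖∫ t in a..b, f t * conj (g t)‖ ≤ (∫ t in a..b, ‖f t‖ ^ 2) + ∫ t in a..b, ‖g t‖ ^ 2 := by
  have hf2 : Continuous fun t => ‖f t‖ ^ 2 := by fun_prop
  have hg2 : Continuous fun t => ‖g t‖ ^ 2 := by fun_prop
  rw [← integral_add (hf2.intervalIntegrable _ _) (hg2.intervalIntegrable _ _),
    ← le_div_iff₀' two_pos, ← integral_div]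
  refine norm_integral_le_of_norm_le hab (MeasureTheory.ae_of_all _ fun t _ => ?_)
    (((hf2.add hg2).div_const 2).intervalIntegrable _ _)
  rw [norm_mul, Complex.norm_conj, le_div_iff₀' two_pos]
  linarith [two_mul_le_add_sq ‖f t‖ ‖g t‖]

end ComplexIntegrals
section Dzektser

variable {x : ℝ → ℂ}

theorem integral_deriv_deriv_deriv_mul_conj_deriv (hx : ContDiff ℝ 3 x)
    (h0 : deriv (deriv x) 0 = 0) (hπ : deriv (deriv x) π = 0) :
    ∫ t in (0:ℝ)..π, deriv (deriv (deriv x)) t * conj (deriv x t)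
      = -((∫ t in (0:ℝ)..π, ‖deriv (deriv x) t‖ ^ 2 : ℝ) : ℂ) := by
  have hu : ContDiff ℝ 2 (deriv x) := hx.deriv'
  have hv : ContDiff ℝ 1 (deriv (deriv x)) := hu.deriv'
  simpa [h0, hπ, integral_mul_conj_self] using
    integral_deriv_mul_conj (a := 0) (b := π) hv (hu.of_le (by norm_num))

theorem integral_dzektser_pairing (hx : ContDiff ℝ 4 x) (hb0 : x 0 = 0) (hbπ : x π = 0)
    (hb0'' : deriv (deriv x) 0 = 0) (hbπ'' : deriv (deriv x) π = 0) :
    ∫ t in (0:ℝ)..π,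
        (deriv (deriv x) t + 2 * deriv (deriv (deriv (deriv x))) t) *
          conj (x t + deriv (deriv x) t)
      = ((-(∫ t in (0:ℝ)..π, ‖deriv x t‖ ^ 2) + 3 * (∫ t in (0:ℝ)..π, ‖deriv (deriv x) t‖ ^ 2)
          - 2 * (∫ t in (0:ℝ)..π, ‖deriv (deriv (deriv x)) t‖ ^ 2) : ℝ) : ℂ) := by
  have hwu := integral_deriv_deriv_deriv_mul_conj_deriv (hx.of_le (by norm_num)) hb0'' hbπ''
  set u := deriv x with hu_def
  set v := deriv u with hv_def
  set w := deriv v with hw_def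
  set z := deriv w with hz_def
  have hu : ContDiff ℝ 3 u := hx.deriv'
  have hv : ContDiff ℝ 2 v := hu.deriv'
  have hw : ContDiff ℝ 1 w := hv.deriv'
  have hx1 : ContDiff ℝ 1 x := hx.of_le (by norm_num)
  have hv1 : ContDiff ℝ 1 v := hv.of_le (by norm_num)
  have hvx := integral_deriv_mul_conj (a := 0) (b := π) (hu.of_le (by norm_num)) hx1
  have hzx := integral_deriv_mul_conj (a := 0) (b := π) hw hx1
  have hzv := integral_deriv_mul_conj (a := 0) (b := π) hw hv1
  simp only [← hu_def, ← hv_def, ← hw_def, ← hz_def, hb0, hbπ, hb0'', hbπ'', map_zero, mul_zero,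
    sub_zero, zero_sub, integral_mul_conj_self] at hvx hzx hzv
  have hexpand : ∫ t in (0:ℝ)..π, (v t + 2 * z t) * conj (x t + v t)
      = ((∫ t in (0:ℝ)..π, v t * conj (x t)) + 2 * ∫ t in (0:ℝ)..π, z t * conj (x t))
        + ((∫ t in (0:ℝ)..π, v t * conj (v t)) + 2 * ∫ t in (0:ℝ)..π, z t * conj (v t)) := by
    simp only [map_add, add_mul, mul_add, mul_assoc]
    rw [integral_add, integral_add, integral_add, integral_const_mul, integral_const_mul] <;>
      apply Continuous.intervalIntegrable <;> fun_prop
  rw [hexpand, integral_mul_conj_self, hvx, hzx, hwu, hzv]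
  push_cast
  ring

end Dzektser

/-- Dzektser equation dissipativity. For `x` (smooth enough) on `(0,π)` with
`x(0)=x(π)=0`, `x''(0)=x''(π)=0`, `Ex = x + x''`, `Ax = x'' + 2x⁽⁴⁾`:
`Re⟨Ax,Ex⟩ = −‖x'‖² + ‖x''‖² − 2‖x⁽³⁾‖² − 2Re∫₀^π x⁽³⁾ x̄' ≤ ‖x''‖² − ‖x⁽³⁾‖² ≤ 0`. -/
theorem stmt16 (x : ℝ → ℂ) (hx : ContDiff ℝ 4 x)
    (hb0 : x 0 = 0) (hbπ : x π = 0)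
    (hb0'' : deriv (deriv x) 0 = 0) (hbπ'' : deriv (deriv x) π = 0) :
    (∫ t in (0:ℝ)..π,
        (deriv (deriv x) t + 2 * deriv (deriv (deriv (deriv x))) t) *
          (starRingEnd ℂ) (x t + deriv (deriv x) t)).re
      = -(∫ t in (0:ℝ)..π, ‖deriv x t‖ ^ 2)
        + (∫ t in (0:ℝ)..π, ‖deriv (deriv x) t‖ ^ 2)
        - 2 * (∫ t in (0:ℝ)..π, ‖deriv (deriv (deriv x)) t‖ ^ 2)
        - 2 * (∫ t in (0:ℝ)..π,
            deriv (deriv (deriv x)) t * (starRingEnd ℂ) (deriv x t)).re ∧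
    (∫ t in (0:ℝ)..π,
        (deriv (deriv x) t + 2 * deriv (deriv (deriv (deriv x))) t) *
          (starRingEnd ℂ) (x t + deriv (deriv x) t)).re
      ≤ (∫ t in (0:ℝ)..π, ‖deriv (deriv x) t‖ ^ 2)
        - (∫ t in (0:ℝ)..π, ‖deriv (deriv (deriv x)) t‖ ^ 2) ∧
    (∫ t in (0:ℝ)..π,
        (deriv (deriv x) t + 2 * deriv (deriv (deriv (deriv x))) t) *
          (starRingEnd ℂ) (x t + deriv (deriv x) t)).re ≤ 0 := by
  have hw : ContDiff ℝ 1 (deriv (deriv (deriv x))) := hx.deriv'.deriv'.deriv'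
  have hmixed := integral_deriv_deriv_deriv_mul_conj_deriv (hx.of_le (by norm_num)) hb0'' hbπ''
  have hmixed_le := two_mul_norm_integral_mul_conj_le pi_pos.le hw.continuous
    (hx.continuous_deriv (by norm_num))
  have hwirt := integral_norm_sq_le_integral_norm_deriv_sq
    ((hx.deriv'.deriv' : ContDiff ℝ 2 _).of_le (by norm_num)) hb0'' hbπ''
  rw [hmixed, norm_neg, Complex.norm_real, Real.norm_eq_abs] at hmixed_le
  rw [integral_dzektser_pairing hx hb0 hbπ hb0'' hbπ'', hmixed, Complex.ofReal_re,
    Complex.neg_re, Complex.ofReal_re]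
  have habs := le_abs_self (∫ t in (0:ℝ)..π, ‖deriv (deriv x) t‖ ^ 2)
  refine ⟨by ring, by linarith, by linarith⟩
end

section
/- Let A be weakly E-radial and suppose the projections P (onto X¹ along X⁰ = ker E) and Q (onto Z¹ along Z⁰) exist as strong limits Px = lim_{s→∞} s(sE−A)⁻¹Ex, Qz = lim_{s→∞} sE(sE−A)⁻¹z. Then for E = [[I,0],[0,0]], A = [[A₁,A₂],[A₃,A₄]] on Z×Z (with A₄ boundedly invertible, A₂A₄⁻¹A₃ bounded, and A₁ a semigroup generator), P = [[I,0],[−A₄⁻¹A₃, 0]] and Q = [[I, −A₂A₄⁻¹],[0,0]], and both are idempotent bounded operators. -/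
open Filter

/-- For the coupled system with `E = [[I,0],[0,0]]`, `A = [[A₁,A₂],[A₃,A₄]]`
(`A₁` a semigroup generator, `A₄` boundedly invertible), with `S s = S₁(s)⁻¹` satisfying
`s S₁(s)⁻¹ → I` strongly and the block formulas `(sE−A)⁻¹E = [[S s, 0],[−A₄⁻¹A₃ S s, 0]]`,
`E(sE−A)⁻¹ = [[S s, −S s A₂A₄⁻¹],[0,0]]`, the projections are
`P = [[I,0],[−A₄⁻¹A₃,0]]` and `Q = [[I,−A₂A₄⁻¹],[0,0]]`, obtained as strong limits, and both
are idempotent bounded operators. -/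
theorem stmt19 {Z : Type*}
    [NormedAddCommGroup Z] [InnerProductSpace ℂ Z] [CompleteSpace Z]
    (A₁ : Z →ₗ.[ℂ] Z)
    (hdense : Dense (A₁.domain : Set Z))
    (hclosed : IsClosed (A₁.graph : Set (Z × Z)))
    (M ω : ℝ) (hM : 1 ≤ M)
    (A₂ A₃ A₄ A₄inv : Z →L[ℂ] Z)
    (hA₄l : A₄inv.comp A₄ = ContinuousLinearMap.id ℂ Z)
    (hA₄r : A₄.comp A₄inv = ContinuousLinearMap.id ℂ Z)
    (ω₀ : ℝ) (hω₀ : ω₀ = ω + M * ‖A₂.comp (A₄inv.comp A₃)‖)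
    (S : ℝ → (Z →L[ℂ] Z))
    (hSmem : ∀ s : ℝ, ω₀ < s → ∀ z : Z, S s z ∈ A₁.domain)
    (hSr : ∀ s : ℝ, ω₀ < s → ∀ (z : Z) (h : S s z ∈ A₁.domain),
      (s : ℂ) • S s z - A₁ ⟨S s z, h⟩ + A₂ (A₄inv (A₃ (S s z))) = z)
    (hSl : ∀ s : ℝ, ω₀ < s → ∀ x : A₁.domain,
      S s ((s : ℂ) • (x : Z) - A₁ x + A₂ (A₄inv (A₃ (x : Z)))) = x)
    (hSbound : ∀ s : ℝ, ω₀ < s → ‖S s‖ ≤ M / (s - ω₀))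
    (hSlim : ∀ z : Z, Tendsto (fun s : ℝ => (s : ℂ) • S s z) atTop (nhds z)) :
    (∀ p : Z × Z,
      Tendsto (fun s : ℝ =>
          (s : ℂ) • (blk (S s) 0 (-(A₄inv.comp (A₃.comp (S s)))) 0) p)
        atTop (nhds ((blk (ContinuousLinearMap.id ℂ Z) 0 (-(A₄inv.comp A₃)) 0) p))) ∧
    (∀ p : Z × Z,
      Tendsto (fun s : ℝ =>
          (s : ℂ) • (blk (S s) (-((S s).comp (A₂.comp A₄inv))) 0 0) p)
        atTop (nhds ((blk (ContinuousLinearMap.id ℂ Z) (-(A₂.comp A₄inv)) 0 0) p))) ∧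
    (blk (ContinuousLinearMap.id ℂ Z) 0 (-(A₄inv.comp A₃)) 0).comp
        (blk (ContinuousLinearMap.id ℂ Z) 0 (-(A₄inv.comp A₃)) 0)
      = blk (ContinuousLinearMap.id ℂ Z) 0 (-(A₄inv.comp A₃)) 0 ∧
    (blk (ContinuousLinearMap.id ℂ Z) (-(A₂.comp A₄inv)) 0 0).comp
        (blk (ContinuousLinearMap.id ℂ Z) (-(A₂.comp A₄inv)) 0 0)
      = blk (ContinuousLinearMap.id ℂ Z) (-(A₂.comp A₄inv)) 0 0 := by
  refine ⟨?_, ?_, ?_, ?_⟩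
  · intro p
    have h1 := hSlim p.1
    have h2 : Tendsto (fun s : ℝ => -(A₄inv (A₃ ((s : ℂ) • S s p.1)))) atTop
        (nhds (-(A₄inv (A₃ p.1)))) :=
      (((A₄inv.continuous.tendsto _).comp ((A₃.continuous.tendsto _).comp h1)).neg)
    have := h1.prodMk_nhds h2
    simp only [blk, ContinuousLinearMap.prod_apply, ContinuousLinearMap.add_apply,
      ContinuousLinearMap.comp_apply, ContinuousLinearMap.coe_fst', ContinuousLinearMap.coe_snd',
      ContinuousLinearMap.zero_apply, add_zero, ContinuousLinearMap.neg_apply,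
      ContinuousLinearMap.id_apply, Prod.smul_mk, smul_neg, map_smul] at this ⊢
    exact this
  · intro p
    have h1 := hSlim p.1
    have h2 := hSlim (A₂ (A₄inv p.2))
    have h3 : Tendsto (fun s : ℝ => (s : ℂ) • S s p.1 + -((s : ℂ) • S s (A₂ (A₄inv p.2))))
        atTop (nhds (p.1 + -(A₂ (A₄inv p.2)))) := h1.add h2.neg
    have h4 : Tendsto (fun _ : ℝ => (0 : Z)) atTop (nhds (0 : Z)) := tendsto_const_nhds
    have := h3.prodMk_nhds h4
    simp only [blk, ContinuousLinearMap.prod_apply, ContinuousLinearMap.add_apply,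
      ContinuousLinearMap.comp_apply, ContinuousLinearMap.coe_fst', ContinuousLinearMap.coe_snd',
      ContinuousLinearMap.zero_apply, add_zero, zero_add, ContinuousLinearMap.neg_apply,
      ContinuousLinearMap.id_apply, Prod.smul_mk, smul_neg, smul_zero, smul_add] at this ⊢
    exact this
  · ext p <;>
      simp [blk, ContinuousLinearMap.prod_apply, ContinuousLinearMap.comp_apply]
  · ext p <;>
      simp [blk, ContinuousLinearMap.prod_apply, ContinuousLinearMap.comp_apply]
end
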